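/- arXiv:1107.5988 — 8 statements merged into one kernel-verified Lean document; each statement's English description precedes it below -/
import Mathlib

section
/- Suppose u* ∈ ℝ^N is a fixed point of the soft-thresholding LCA, i.e. 0 = −u* − (ΦᵀΦ − I)·T_λ(u*) + Φᵀy. Then a* := T_λ(u*) is a global minimizer of the BPDN objective: V(a*) ≤ V(a) for all a ∈ ℝ^N. -/
open Matrix

/-- The soft-thresholding function `T_λ`. -/
noncomputable def softThresh (lam u : ℝ) : ℝ :=
  if |u| ≤ lam then 0 else u - lam * Real.sign u

/-- The BPDN objective `V(a) = (1/2)‖y − Φa‖₂² + λ‖a‖₁`. -/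
noncomputable def bpdn {M N : ℕ} (Φ : Matrix (Fin M) (Fin N) ℝ)
    (y : Fin M → ℝ) (lam : ℝ) (a : Fin N → ℝ) : ℝ :=
  (1 / 2) * ∑ m, (y m - (Φ *ᵥ a) m) ^ 2 + lam * ∑ n, |a n|

/-!
The fixed-point equation says exactly that `Φᵀ(y - Φa*) = u* - a*`, the negative gradient of the
quadratic part of `V` at `a* = T_λ(u*)`. Soft-thresholding makes `u* - a*` a subgradient of `λ‖·‖₁`
at `a*` (coordinatewise: it has absolute value at most `λ` and equals `λ sign(a*ₙ)` where `a*ₙ ≠ 0`),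
so `0 ∈ ∂V(a*)`. Concretely, expanding the square gives
`V(a) - V(a*) = ½‖Φ(a - a*)‖² + λ‖a‖₁ - λ‖a*‖₁ - ⟨u* - a*, a - a*⟩ ≥ 0`.
-/

section SoftThresh

variable {lam : ℝ}

lemma softThresh_cases (hlam : 0 ≤ lam) (u : ℝ) :
    (|u| ≤ lam ∧ softThresh lam u = 0) ∨
      (lam < u ∧ softThresh lam u = u - lam) ∨
      (u < -lam ∧ softThresh lam u = u + lam) := by
  unfold softThresh
  split_ifs with h
  · exact .inl ⟨h, rfl⟩
  · rcases lt_abs.mp (not_le.mp h) with hu | hu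
    · exact .inr (.inl ⟨hu, by rw [Real.sign_of_pos (by linarith)]; ring⟩)
    · exact .inr (.inr ⟨by linarith, by rw [Real.sign_of_neg (by linarith)]; ring⟩)

/-- `u - T_λ(u)` is a subgradient of `λ|·|` at `T_λ(u)`. -/
lemma sub_softThresh_mul_sub_le (hlam : 0 ≤ lam) (u b : ℝ) :
    (u - softThresh lam u) * (b - softThresh lam u) ≤ lam * |b| - lam * |softThresh lam u| := by
  rcases softThresh_cases hlam u with ⟨hu, hT⟩ | ⟨hu, hT⟩ | ⟨hu, hT⟩ <;> rw [hT]
  · have : u * b ≤ lam * |b| := (le_abs_self _).trans <| by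
      rw [abs_mul]; exact mul_le_mul_of_nonneg_right hu (abs_nonneg b)
    simpa using this
  · rw [abs_of_pos (by linarith : 0 < u - lam)]
    nlinarith [le_abs_self b]
  · rw [abs_of_neg (by linarith : u + lam < 0)]
    nlinarith [neg_abs_le b]

end SoftThresh

section Quadratic

variable {M N : ℕ} (Φ : Matrix (Fin M) (Fin N) ℝ) (y : Fin M → ℝ)

lemma sum_sq_sub_mulVec (a b : Fin N → ℝ) :
    ∑ m, (y m - (Φ *ᵥ a) m) ^ 2 =
      ∑ m, (y m - (Φ *ᵥ b) m) ^ 2 - 2 * (Φᵀ *ᵥ (y - Φ *ᵥ b)) ⬝ᵥ (a - b) +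
        (Φ *ᵥ (a - b)) ⬝ᵥ (Φ *ᵥ (a - b)) := by
  have hsq : ∀ c, ∑ m, (y m - (Φ *ᵥ c) m) ^ 2 = (y - Φ *ᵥ c) ⬝ᵥ (y - Φ *ᵥ c) :=
    fun c => by simp [dotProduct, sq]
  have hres : y - Φ *ᵥ a = (y - Φ *ᵥ b) - Φ *ᵥ (a - b) := by rw [mulVec_sub]; abel
  rw [hsq, hsq, hres, mulVec_transpose, ← dotProduct_mulVec]
  generalize y - Φ *ᵥ b = r, Φ *ᵥ (a - b) = d
  rw [sub_dotProduct, dotProduct_sub, dotProduct_sub, dotProduct_comm d r]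
  ring

lemma bpdn_le_of_subgradient {lam : ℝ} {a b : Fin N → ℝ}
    (hsub : ∀ n, (Φᵀ *ᵥ (y - Φ *ᵥ b)) n * (a n - b n) ≤ lam * |a n| - lam * |b n|) :
    bpdn Φ y lam b ≤ bpdn Φ y lam a := by
  have hlin : (Φᵀ *ᵥ (y - Φ *ᵥ b)) ⬝ᵥ (a - b) ≤ lam * ∑ n, |a n| - lam * ∑ n, |b n| := by
    rw [Finset.mul_sum, Finset.mul_sum, ← Finset.sum_sub_distrib]
    exact Finset.sum_le_sum fun n _ => hsub n
  have hquad : 0 ≤ (Φ *ᵥ (a - b)) ⬝ᵥ (Φ *ᵥ (a - b)) :=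
    Finset.sum_nonneg fun m _ => mul_self_nonneg _
  unfold bpdn
  rw [sum_sq_sub_mulVec Φ y a b]
  linarith

end Quadratic

lemma transpose_mulVec_residual_of_fixedPoint {m n R : Type*} [Fintype m] [Fintype n]
    [DecidableEq n] [CommRing R] {Φ : Matrix m n R} {y : m → R} {u a : n → R}
    (hfix : (0 : n → R) = -u - (Φᵀ * Φ - 1) *ᵥ a + Φᵀ *ᵥ y) :
    Φᵀ *ᵥ (y - Φ *ᵥ a) = u - a := by
  rw [sub_mulVec, one_mulVec, ← mulVec_mulVec] at hfix
  rw [mulVec_sub]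
  linear_combination (norm := module) -hfix

theorem stmt0_general {M N : ℕ}
    (Φ : Matrix (Fin M) (Fin N) ℝ) (y : Fin M → ℝ)
    (lam : ℝ) (hlam : 0 < lam) (ustar : Fin N → ℝ)
    (hfix : (0 : Fin N → ℝ) =
      -ustar - (Φᵀ * Φ - 1) *ᵥ (fun n => softThresh lam (ustar n)) + Φᵀ *ᵥ y) :
    ∀ a : Fin N → ℝ,
      bpdn Φ y lam (fun n => softThresh lam (ustar n)) ≤ bpdn Φ y lam a := by
  intro a
  apply bpdn_le_of_subgradient
  intro n
  rw [transpose_mulVec_residual_of_fixedPoint hfix]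
  exact sub_softThresh_mul_sub_le hlam.le (ustar n) (a n)

/-- a fixed point of the soft-thresholding LCA yields a global
minimizer of the BPDN objective. -/
theorem stmt0 {M N : ℕ} (hM : 0 < M) (hN : 0 < N)
    (Φ : Matrix (Fin M) (Fin N) ℝ) (y : Fin M → ℝ)
    (lam : ℝ) (hlam : 0 < lam) (ustar : Fin N → ℝ)
    (hfix : (0 : Fin N → ℝ) =
      -ustar - (Φᵀ * Φ - 1) *ᵥ (fun n => softThresh lam (ustar n)) + Φᵀ *ᵥ y) :
    ∀ a : Fin N → ℝ,
      bpdn Φ y lam (fun n => softThresh lam (ustar n)) ≤ bpdn Φ y lam a :=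
  stmt0_general Φ y lam hlam ustar hfix
end

section
/- Suppose a* ∈ ℝ^N is a global minimizer of the BPDN objective V. Then u* := a* + Φᵀ(y − Φa*) satisfies T_λ(u*) = a* and u* is a fixed point of the soft-thresholding LCA, i.e. 0 = −u* − (ΦᵀΦ − I)·T_λ(u*) + Φᵀy. -/
/-!
Perturbing the minimizer `a*` in the single coordinate `n` by `t` changes `V` by
`-g t + (‖Φₙ‖²/2) t² + λ (|aₙ + t| - |aₙ|)`, where `g = (Φᵀ(y - Φa*))ₙ`. Since this is
nonnegative for every `t`, letting `t → 0` along the directions `±1` and `±aₙ` gives the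
subgradient condition `|g| ≤ λ`, `g aₙ = λ |aₙ|`, and this says precisely that
`T_λ(aₙ + g) = aₙ`. The LCA fixed-point equation is then linear algebra.
-/

open Matrix

open Filter Topology

lemma le_of_forall_mem_Ioo_mul_le {a b c : ℝ}
    (h : ∀ τ ∈ Set.Ioo (0 : ℝ) 1, b * τ ≤ a * τ + c * τ ^ 2) : b ≤ a := by
  have hlim : Tendsto (fun τ => a + c * τ) (𝓝[>] 0) (𝓝 a) := by
    have := (Continuous.tendsto (by fun_prop : Continuous fun τ : ℝ => a + c * τ) 0).mono_left
      (nhdsWithin_le_nhds (s := Set.Ioi 0))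
    simpa using this
  refine ge_of_tendsto hlim ?_
  filter_upwards [Ioo_mem_nhdsGT one_pos] with τ hτ
  refine le_of_mul_le_mul_right ?_ hτ.1
  linarith [h τ hτ]

lemma abs_le_of_forall_mul_le {c g s lam : ℝ} (hlam : 0 ≤ lam)
    (h : ∀ t, g * t ≤ c * t ^ 2 + lam * (|s + t| - |s|)) : |g| ≤ lam := by
  have hdir (σ : ℝ) (hσ : |σ| = 1) : g * σ ≤ lam := by
    refine le_of_forall_mem_Ioo_mul_le (c := c) fun τ hτ => ?_
    have hΔ : |s + σ * τ| - |s| ≤ τ := by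
      have := abs_add_le s (σ * τ)
      rw [abs_mul, hσ, abs_of_pos hτ.1] at this
      linarith
    have hσ2 : σ ^ 2 = 1 := by rw [← sq_abs, hσ, one_pow]
    have hστ := h (σ * τ)
    have hlamΔ := mul_le_mul_of_nonneg_left hΔ hlam
    linear_combination hστ + hlamΔ + c * τ ^ 2 * hσ2
  refine abs_le'.2 ⟨by simpa using hdir 1 (by simp), ?_⟩
  simpa using hdir (-1) (by simp)

lemma mul_eq_mul_abs_of_forall_mul_le {c g s lam : ℝ}
    (h : ∀ t, g * t ≤ c * t ^ 2 + lam * (|s + t| - |s|)) : g * s = lam * |s| := by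
  have hdir (σ : ℝ) (hσ : |σ| = 1) : g * s * σ ≤ lam * |s| * σ := by
    refine le_of_forall_mem_Ioo_mul_le (c := c * s ^ 2) fun τ hτ => ?_
    have hpos : 0 < 1 + σ * τ := by
      have : |σ * τ| < 1 := by rw [abs_mul, hσ, one_mul, abs_of_pos hτ.1]; exact hτ.2
      linarith [neg_abs_le (σ * τ)]
    have hΔ : |s + σ * s * τ| - |s| = |s| * σ * τ := by
      rw [show s + σ * s * τ = s * (1 + σ * τ) by ring, abs_mul, abs_of_pos hpos]
      ring
    have hσ2 : σ ^ 2 = 1 := by rw [← sq_abs, hσ, one_pow]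
    have hστ := h (σ * s * τ)
    rw [hΔ] at hστ
    linear_combination hστ + c * s ^ 2 * τ ^ 2 * hσ2
  exact le_antisymm (by simpa using hdir 1 (by simp)) (by simpa using hdir (-1) (by simp))

lemma softThresh_add_eq_self {g s lam : ℝ} (hg : |g| ≤ lam) (hgs : g * s = lam * |s|) :
    softThresh lam (s + g) = s := by
  have hlam : 0 ≤ lam := (abs_nonneg g).trans hg
  rcases lt_trichotomy s 0 with hs | rfl | hs
  · have hg' : g = -lam := by
      rw [abs_of_neg hs] at hgs
      exact mul_right_cancel₀ hs.ne (by linarith)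
    rw [softThresh, if_neg (by rw [abs_of_neg (by linarith)]; linarith),
      Real.sign_of_neg (by linarith)]
    linarith
  · simp [softThresh, hg]
  · have hg' : g = lam := by
      rw [abs_of_pos hs] at hgs
      exact mul_right_cancel₀ hs.ne' (by linarith)
    rw [softThresh, if_neg (by rw [abs_of_pos (by linarith)]; linarith),
      Real.sign_of_pos (by linarith)]
    linarith

lemma bpdn_add_single {M N : ℕ} (Φ : Matrix (Fin M) (Fin N) ℝ) (y : Fin M → ℝ) (lam : ℝ)
    (a : Fin N → ℝ) (n : Fin N) (t : ℝ) :
    bpdn Φ y lam (a + Pi.single n t) = bpdn Φ y lam a - (Φᵀ *ᵥ (y - Φ *ᵥ a)) n * t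
      + (∑ m, Φ m n ^ 2) / 2 * t ^ 2 + lam * (|a n + t| - |a n|) := by
  have hsq : ∑ m, (y m - (Φ *ᵥ (a + Pi.single n t)) m) ^ 2 = ∑ m, (y m - (Φ *ᵥ a) m) ^ 2
      - 2 * t * ∑ m, Φ m n * (y m - (Φ *ᵥ a) m) + t ^ 2 * ∑ m, Φ m n ^ 2 := by
    rw [Finset.mul_sum, Finset.mul_sum, ← Finset.sum_sub_distrib, ← Finset.sum_add_distrib]
    refine Finset.sum_congr rfl fun m _ => ?_
    simp only [mulVec_add, mulVec_single, op_smul_eq_smul, Pi.add_apply, Pi.smul_apply, col_apply,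
      smul_eq_mul]
    ring
  have hcorr : (Φᵀ *ᵥ (y - Φ *ᵥ a)) n = ∑ m, Φ m n * (y m - (Φ *ᵥ a) m) := by
    simp [mulVec, dotProduct]
  have habs : ∑ k, |(a + Pi.single n t : Fin N → ℝ) k| = ∑ k, |a k| + (|a n + t| - |a n|) := by
    rw [← sub_eq_iff_eq_add', ← Finset.sum_sub_distrib, Finset.sum_eq_single n]
    · simp
    · intro k _ hk
      simp [hk]
    · simp
  simp only [bpdn, hsq, habs, hcorr]
  ring

lemma softThresh_add_correlation_eq_of_bpdn_minimizer {M N : ℕ}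
    {Φ : Matrix (Fin M) (Fin N) ℝ} {y : Fin M → ℝ} {lam : ℝ} (hlam : 0 ≤ lam)
    {astar : Fin N → ℝ} (hmin : ∀ a, bpdn Φ y lam astar ≤ bpdn Φ y lam a) (n : Fin N) :
    softThresh lam (astar n + (Φᵀ *ᵥ (y - Φ *ᵥ astar)) n) = astar n := by
  have hvar (t : ℝ) : (Φᵀ *ᵥ (y - Φ *ᵥ astar)) n * t
      ≤ (∑ m, Φ m n ^ 2) / 2 * t ^ 2 + lam * (|astar n + t| - |astar n|) := by
    have := hmin (astar + Pi.single n t)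
    rw [bpdn_add_single] at this
    linarith
  exact softThresh_add_eq_self (abs_le_of_forall_mul_le hlam hvar)
    (mul_eq_mul_abs_of_forall_mul_le hvar)

theorem stmt1_general {M N : ℕ}
    (Φ : Matrix (Fin M) (Fin N) ℝ) (y : Fin M → ℝ)
    (lam : ℝ) (hlam : 0 < lam) (astar : Fin N → ℝ)
    (hmin : ∀ a : Fin N → ℝ, bpdn Φ y lam astar ≤ bpdn Φ y lam a) :
    (fun n => softThresh lam ((astar + Φᵀ *ᵥ (y - Φ *ᵥ astar)) n)) = astar ∧
    (0 : Fin N → ℝ) =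
      -(astar + Φᵀ *ᵥ (y - Φ *ᵥ astar))
        - (Φᵀ * Φ - 1) *ᵥ
            (fun n => softThresh lam ((astar + Φᵀ *ᵥ (y - Φ *ᵥ astar)) n))
        + Φᵀ *ᵥ y := by
  have hfix : (fun n => softThresh lam ((astar + Φᵀ *ᵥ (y - Φ *ᵥ astar)) n)) = astar :=
    funext (softThresh_add_correlation_eq_of_bpdn_minimizer hlam.le hmin)
  refine ⟨hfix, ?_⟩
  rw [hfix, sub_mulVec, one_mulVec, ← mulVec_mulVec, mulVec_sub]
  abel

/-- if `a*` is a global minimizer of the BPDN objective, then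
`u* := a* + Φᵀ(y − Φa*)` satisfies `T_λ(u*) = a*` and `u*` is a fixed point of
the soft-thresholding LCA. -/
theorem stmt1 {M N : ℕ} (hM : 0 < M) (hN : 0 < N)
    (Φ : Matrix (Fin M) (Fin N) ℝ) (y : Fin M → ℝ)
    (lam : ℝ) (hlam : 0 < lam) (astar : Fin N → ℝ)
    (hmin : ∀ a : Fin N → ℝ, bpdn Φ y lam astar ≤ bpdn Φ y lam a) :
    (fun n => softThresh lam ((astar + Φᵀ *ᵥ (y - Φ *ᵥ astar)) n)) = astar ∧
    (0 : Fin N → ℝ) =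
      -(astar + Φᵀ *ᵥ (y - Φ *ᵥ astar))
        - (Φᵀ * Φ - 1) *ᵥ
            (fun n => softThresh lam ((astar + Φᵀ *ᵥ (y - Φ *ᵥ astar)) n))
        + Φᵀ *ᵥ y :=
  stmt1_general Φ y lam hlam astar hmin
end

section
/- Let u : [0,∞) → ℝ^N be differentiable and satisfy the LCA dynamics τ·u̇(t) = −u(t) − (ΦᵀΦ − I)·T_λ(u(t)) + Φᵀy for all t ≥ 0, where τ > 0. If the outputs converge, i.e. T_λ(u(t)) → a* as t → ∞ for some a* ∈ ℝ^N, then the states also converge: u(t) → u* := a* + Φᵀ(y − Φa*) as t → ∞. -/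
/-!
The dynamics read `τ u̇ = -u + h(t)` with input `h = -(ΦᵀΦ - I) T_λ(u) + Φᵀy`,
which converges to `u* = a* + Φᵀ(y - Φa*)` along with `T_λ(u)`. Such a linear relaxation
tracks its input: `e^{t/τ} (u(t) - u*)` has derivative `e^{t/τ}/τ · (h(t) - u*)`, so once
`‖h - u*‖ ≤ δ` on `[T, ∞)`, `‖u(t) - u*‖ ≤ e^{(T-t)/τ} ‖u(T) - u*‖ + δ`.
-/

open Matrix

/-- The generic thresholding activation function `T_λ` built from `f`. -/
noncomputable def Tl (lam : ℝ) (f : ℝ → ℝ) (u : ℝ) : ℝ :=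
  if |u| ≤ lam then 0 else f u

open Filter Set Real Topology

section Relaxation

variable {E : Type*} [NormedAddCommGroup E] [NormedSpace ℝ E] {τ : ℝ} {w w' h : ℝ → E} {L : E}

theorem hasDerivWithinAt_exp_smul_sub_of_relaxation {s : Set ℝ} {t : ℝ} (hτ : τ ≠ 0)
    (hw : HasDerivWithinAt w (w' t) s t) (heq : τ • w' t = -w t + h t) :
    HasDerivWithinAt (fun x => exp (x / τ) • (w x - L)) ((exp (t / τ) / τ) • (h t - L)) s t := by
  have hexp : HasDerivWithinAt (fun x => exp (x / τ)) (exp (t / τ) * (1 / τ)) s t :=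
    ((hasDerivAt_id t).div_const τ).exp.hasDerivWithinAt
  refine (hexp.smul (hw.sub_const L)).congr_deriv ?_
  have hw' : w' t = τ⁻¹ • (-w t + h t) := by rw [← heq, inv_smul_smul₀ hτ]
  rw [hw', smul_smul, one_div, ← div_eq_mul_inv, ← smul_add]
  congr 1
  abel

theorem norm_sub_le_of_relaxation (hτ : 0 < τ)
    (hd : ∀ t, 0 ≤ t → HasDerivWithinAt w (w' t) (Ici 0) t)
    (heq : ∀ t, 0 ≤ t → τ • w' t = -w t + h t) {T δ : ℝ} (hT : 0 ≤ T)
    (hδ : ∀ s, T ≤ s → ‖h s - L‖ ≤ δ) {t : ℝ} (ht : T ≤ t) :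
    ‖w t - L‖ ≤ exp ((T - t) / τ) * ‖w T - L‖ + δ := by
  set φ : ℝ → E := fun x => exp (x / τ) • (w x - L)
  have hcont : ContinuousOn φ (Icc T t) := fun x hx =>
    ((hasDerivWithinAt_exp_smul_sub_of_relaxation hτ.ne' (hd x (hT.trans hx.1))
      (heq x (hT.trans hx.1))).continuousWithinAt).mono fun y hy => hT.trans hy.1
  have hderiv : ∀ x ∈ Ico T t, HasDerivWithinAt φ ((exp (x / τ) / τ) • (h x - L)) (Ici x) x :=
    fun x hx => hasDerivWithinAt_exp_smul_sub_of_relaxation hτ.ne'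
      ((hd x (hT.trans hx.1)).mono (Ici_subset_Ici.2 (hT.trans hx.1))) (heq x (hT.trans hx.1))
  have hbound := image_norm_le_of_norm_deriv_right_le_deriv_boundary hcont hderiv
    (B := fun x => ‖φ T‖ + δ * (exp (x / τ) - exp (T / τ))) (by simp)
    (fun x => (((hasDerivAt_id x).div_const τ).exp.sub_const _ |>.const_mul δ).const_add _)
    (fun x hx => by
      rw [norm_smul, norm_of_nonneg (div_pos (exp_pos _) hτ).le, id, mul_one_div, mul_comm δ]
      exact mul_le_mul_of_nonneg_left (hδ x hx.1) (div_pos (exp_pos _) hτ).le)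
    (right_mem_Icc.2 ht)
  simp only [φ, norm_smul, norm_of_nonneg (exp_pos _).le] at hbound
  have hsplit : exp (T / τ) = exp ((T - t) / τ) * exp (t / τ) := by
    rw [← exp_add, sub_div, sub_add_cancel]
  have hδ0 : 0 ≤ δ := (norm_nonneg _).trans (hδ T le_rfl)
  have hpos := exp_pos (t / τ)
  refine le_of_mul_le_mul_left ?_ hpos
  rw [hsplit] at hbound
  nlinarith [mul_nonneg hδ0 (mul_nonneg (exp_pos ((T - t) / τ)).le hpos.le)]

theorem tendsto_of_relaxation (hτ : 0 < τ)
    (hd : ∀ t, 0 ≤ t → HasDerivWithinAt w (w' t) (Ici 0) t)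
    (heq : ∀ t, 0 ≤ t → τ • w' t = -w t + h t) (hh : Tendsto h atTop (𝓝 L)) :
    Tendsto w atTop (𝓝 L) := by
  rw [Metric.tendsto_atTop]
  intro ε hε
  obtain ⟨T₀, hT₀⟩ := Metric.tendsto_atTop.1 hh (ε / 2) (half_pos hε)
  set T := max T₀ 0
  have hδ : ∀ s, T ≤ s → ‖h s - L‖ ≤ ε / 2 := fun s hs => by
    rw [← dist_eq_norm]; exact (hT₀ s ((le_max_left _ _).trans hs)).le
  have hdecay : Tendsto (fun t => exp ((T - t) / τ) * ‖w T - L‖) atTop (𝓝 0) := by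
    have : Tendsto (fun t => (T - t) / τ) atTop atBot :=
      (tendsto_atBot_add_const_left _ T tendsto_neg_atTop_atBot).atBot_div_const hτ
    simpa using (tendsto_exp_atBot.comp this).mul_const ‖w T - L‖
  obtain ⟨T₁, hT₁⟩ := (hdecay.eventually (gt_mem_nhds (half_pos hε))).exists_forall_of_atTop
  refine ⟨max T T₁, fun t ht => ?_⟩
  rw [dist_eq_norm]
  calc ‖w t - L‖ ≤ exp ((T - t) / τ) * ‖w T - L‖ + ε / 2 :=
        norm_sub_le_of_relaxation hτ hd heq (le_max_right _ _) hδ ((le_max_left _ _).trans ht)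
    _ < ε / 2 + ε / 2 := by gcongr; exact hT₁ t ((le_max_right _ _).trans ht)
    _ = ε := add_halves ε

end Relaxation

theorem stmt4_general {M N : ℕ}
    (Φ : Matrix (Fin M) (Fin N) ℝ) (y : Fin M → ℝ)
    (lam : ℝ) (τ : ℝ) (hτ : 0 < τ) (f : ℝ → ℝ)
    (u u' : ℝ → Fin N → ℝ)
    (hderiv : ∀ t : ℝ, 0 ≤ t → HasDerivWithinAt u (u' t) (Set.Ici 0) t)
    (hdyn : ∀ t : ℝ, 0 ≤ t →
      τ • u' t =
        -(u t) - (Φᵀ * Φ - 1) *ᵥ (fun n => Tl lam f (u t n)) + Φᵀ *ᵥ y)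
    (astar : Fin N → ℝ)
    (hconv : Filter.Tendsto (fun t => (fun n => Tl lam f (u t n)))
      Filter.atTop (nhds astar)) :
    Filter.Tendsto u Filter.atTop (nhds (astar + Φᵀ *ᵥ (y - Φ *ᵥ astar))) := by
  have hinput : Tendsto (fun t => -((Φᵀ * Φ - 1) *ᵥ fun n => Tl lam f (u t n)) + Φᵀ *ᵥ y) atTop
      (𝓝 (-((Φᵀ * Φ - 1) *ᵥ astar) + Φᵀ *ᵥ y)) :=
    (((continuous_const.matrix_mulVec continuous_id).tendsto astar).comp hconv).neg.add_const _
  have hfixed : -((Φᵀ * Φ - 1) *ᵥ astar) + Φᵀ *ᵥ y = astar + Φᵀ *ᵥ (y - Φ *ᵥ astar) := by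
    simp only [sub_mulVec, mulVec_sub, one_mulVec, mulVec_mulVec]
    abel
  refine hfixed ▸ tendsto_of_relaxation hτ hderiv (fun t ht => ?_) hinput
  rw [hdyn t ht, sub_eq_add_neg, add_assoc]

/-- if `u` solves the LCA dynamics on `[0,∞)` and the outputs
`T_λ(u(t))` converge to `a*` as `t → ∞`, then the states converge:
`u(t) → u* := a* + Φᵀ(y − Φa*)`. -/
theorem stmt4 {M N : ℕ} (hM : 0 < M) (hN : 0 < N)
    (Φ : Matrix (Fin M) (Fin N) ℝ) (y : Fin M → ℝ)
    (lam : ℝ) (hlam : 0 < lam) (τ : ℝ) (hτ : 0 < τ) (f : ℝ → ℝ)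
    (hf_cont : ContinuousOn f {u : ℝ | lam ≤ |u|})
    (hf_diff : ∀ u : ℝ, lam < |u| → DifferentiableAt ℝ f u)
    (hf_odd : ∀ u : ℝ, lam ≤ |u| → f (-u) = -f u)
    (hf_lam : f lam = 0)
    (hf_pos : ∀ u : ℝ, lam < |u| → 0 < deriv f u)
    (hf_le : ∀ u : ℝ, lam ≤ u → f u ≤ u)
    (u u' : ℝ → Fin N → ℝ)
    (hderiv : ∀ t : ℝ, 0 ≤ t → HasDerivWithinAt u (u' t) (Set.Ici 0) t)
    (hdyn : ∀ t : ℝ, 0 ≤ t →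
      τ • u' t =
        -(u t) - (Φᵀ * Φ - 1) *ᵥ (fun n => Tl lam f (u t n)) + Φᵀ *ᵥ y)
    (astar : Fin N → ℝ)
    (hconv : Filter.Tendsto (fun t => (fun n => Tl lam f (u t n)))
      Filter.atTop (nhds astar)) :
    Filter.Tendsto u Filter.atTop (nhds (astar + Φᵀ *ᵥ (y - Φ *ᵥ astar))) :=
  stmt4_general Φ y lam τ hτ f u u' hderiv hdyn astar hconv
end

section
/- Let u : [0,∞) → ℝ^N be differentiable and satisfy the LCA dynamics τ·u̇(t) = −u(t) − (ΦᵀΦ − I)·T_λ(u(t)) + Φᵀy for all t ≥ 0, and let u* be a fixed point, i.e. 0 = −u* − (ΦᵀΦ − I)·T_λ(u*) + Φᵀy, with a* := T_λ(u*) and Γ* := {n : a*_n ≠ 0}. Assume: (a) there is α > 0 with |f'(v)| ≤ α for all v in the interior of D; (b) there is δ ≥ 0 with αδ < 1 such that for every t ≥ 0 and every x ∈ ℝ^N supported on Γ(t) ∪ Γ*, where Γ(t) = {n : |u_n(t)| > λ}, one has (1 − δ)‖x‖₂² ≤ ‖Φx‖₂² ≤ (1 + δ)‖x‖₂². Then the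 output converges exponentially: ‖T_λ(u(t)) − a*‖₂ ≤ α·‖u(0) − u*‖₂·e^{−(1−αδ)t/τ} for all t ≥ 0. -/
/-!
Write `T_λ = g ∘ S_λ`, where `S_λ` is soft thresholding and `g`, the odd extension of
`s ↦ f (s + λ)`, is `α`-Lipschitz because `|f'| ≤ α`. Let `w n = S_λ (u n)` on the coordinates
where `|u* n| ≤ λ` (equivalently `a* n = 0`) and `w n = u n - u* n` elsewhere. Then
`E = ‖w‖²` is differentiable along the trajectory with `E' = 2 ⟪w, u'⟫`, and
`|T_λ (u n) - a* n| ≤ α |w n|`, `(w n)² ≤ w n (u n - u* n)`. Both `w` and `T_λ u - a*` are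
supported on `Γ(t) ∪ Γ*`, so polarizing the restricted isometry bounds at `α w ± (T_λ u - a*)`
gives `⟪w, (ΦᵀΦ - I)(T_λ u - a*)⟫ ≥ -αδ ‖w‖²`, hence `τ E' ≤ -2 (1 - αδ) E`. By Grönwall,
`‖T_λ u(t) - a*‖² ≤ α² E(t) ≤ α² E(0) e^{-2(1-αδ)t/τ} ≤ α² ‖u(0) - u*‖² e^{-2(1-αδ)t/τ}`.
-/

open Matrix

open Set Real NNReal

lemma hasDerivAt_max_zero_sq (x : ℝ) : HasDerivAt (fun y : ℝ => max y 0 ^ 2) (2 * max x 0) x := by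
  have off_zero : ∀ y ≠ 0, HasDerivAt (fun y : ℝ => max y 0 ^ 2) (2 * max y 0) y := by
    intro y hy
    rcases hy.lt_or_gt with hy | hy
    · rw [max_eq_right hy.le, mul_zero]
      refine (hasDerivAt_const y 0).congr_of_eventuallyEq ?_
      filter_upwards [Iio_mem_nhds hy] with z hz
      simp [max_eq_right (show z < 0 from hz).le]
    · rw [max_eq_left hy.le]
      refine (hasDerivAt_pow 2 y).congr_of_eventuallyEq ?_ |>.congr_deriv (by ring)
      filter_upwards [Ioi_mem_nhds hy] with z hz
      rw [max_eq_left hz.le]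
  rcases eq_or_ne x 0 with rfl | hx
  · exact hasDerivAt_of_hasDerivAt_of_ne off_zero (by fun_prop) (by fun_prop)
  · exact off_zero x hx

theorem Convex.lipschitzOnWith_of_abs_deriv_le {D : Set ℝ} (hD : Convex ℝ D) {f : ℝ → ℝ}
    (hf : ContinuousOn f D) (hf' : DifferentiableOn ℝ f (interior D)) {K : ℝ≥0}
    (hK : ∀ x ∈ interior D, |deriv f x| ≤ K) : LipschitzOnWith K f D := by
  have key : ∀ x ∈ D, ∀ y ∈ D, x ≤ y → |f y - f x| ≤ K * (y - x) := fun x hx y hy hxy =>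
    abs_le.2 ⟨by simpa [neg_mul] using (hD.mul_sub_le_image_sub_of_le_deriv hf hf'
        (fun z hz => (abs_le.1 (hK z hz)).1) x hx y hy hxy),
      hD.image_sub_le_mul_sub_of_deriv_le hf hf' (fun z hz => (abs_le.1 (hK z hz)).2) x hx y hy hxy⟩
  refine LipschitzOnWith.of_dist_le_mul fun x hx y hy => ?_
  rw [Real.dist_eq, Real.dist_eq]
  rcases le_total x y with hxy | hxy
  · rw [abs_sub_comm, abs_of_nonpos (sub_nonpos.2 hxy), neg_sub]; exact key x hx y hy hxy
  · rw [abs_of_nonneg (sub_nonneg.2 hxy)]; exact key y hy x hx hxy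

noncomputable def oddExtension (h : ℝ → ℝ) (s : ℝ) : ℝ := if 0 ≤ s then h s else -h (-s)

lemma LipschitzOnWith.lipschitzWith_oddExtension {K : ℝ≥0} {h : ℝ → ℝ}
    (hh : LipschitzOnWith K h (Ici 0)) (h0 : h 0 = 0) : LipschitzWith K (oddExtension h) := by
  have bound : ∀ s, 0 ≤ s → |h s| ≤ K * s := fun s hs => by
    simpa [h0, Real.dist_eq, abs_of_nonneg hs] using hh.dist_le_mul s hs 0 self_mem_Ici
  refine LipschitzWith.of_dist_le_mul fun s t => ?_
  have := hh.dist_le_mul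
  simp only [oddExtension, Real.dist_eq, mem_Ici] at this ⊢
  split_ifs with hs ht ht
  · exact this s hs t ht
  · calc |h s - -h (-t)| ≤ |h s| + |h (-t)| := (abs_sub _ _).trans_eq (by rw [abs_neg])
      _ ≤ K * s + K * -t := add_le_add (bound s hs) (bound (-t) (by linarith))
      _ = K * |s - t| := by rw [abs_of_nonneg (by linarith)]; ring
  · calc |-h (-s) - h t| ≤ |h (-s)| + |h t| := (abs_sub _ _).trans_eq (by rw [abs_neg])
      _ ≤ K * -s + K * t := add_le_add (bound (-s) (by linarith)) (bound t ht)
      _ = K * |s - t| := by rw [abs_of_nonpos (by linarith)]; ring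
  · simpa [abs_sub_comm, neg_add_eq_sub] using this (-s) (by linarith) (-t) (by linarith)

theorem le_mul_exp_of_hasDerivWithinAt_le {E E' : ℝ → ℝ} {k : ℝ}
    (hE : ∀ t ∈ Ici (0 : ℝ), HasDerivWithinAt E (E' t) (Ici 0) t)
    (hle : ∀ t ∈ Ici (0 : ℝ), E' t ≤ k * E t) {t : ℝ} (ht : 0 ≤ t) :
    E t ≤ E 0 * exp (k * t) := by
  have := le_gronwallBound_of_liminf_deriv_right_le (ε := 0) (a := 0) (b := t)
    (fun s hs => (hE s hs.1).continuousWithinAt.mono Icc_subset_Ici_self)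
    (fun s hs _ hr => ((hE s hs.1).mono (Ici_subset_Ici.2 hs.1)).liminf_right_slope_le hr)
    le_rfl (fun s hs => (add_zero (k * E s)).symm ▸ hle s hs.1) t ⟨ht, le_rfl⟩
  rwa [gronwallBound_ε0, sub_zero] at this

def RestrictedIsometry {m ι : Type*} [Fintype m] [Fintype ι] (Φ : Matrix m ι ℝ) (Γ : Set ι)
    (δ : ℝ) : Prop :=
  ∀ x : ι → ℝ, (∀ i ∉ Γ, x i = 0) →
    (1 - δ) * (x ⬝ᵥ x) ≤ Φ *ᵥ x ⬝ᵥ Φ *ᵥ x ∧ Φ *ᵥ x ⬝ᵥ Φ *ᵥ x ≤ (1 + δ) * (x ⬝ᵥ x)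

theorem RestrictedIsometry.neg_mul_le_dotProduct_mulVec {m ι : Type*} [Fintype m] [Fintype ι]
    [DecidableEq ι] {Φ : Matrix m ι ℝ} {Γ : Set ι} {δ : ℝ} (hΦ : RestrictedIsometry Φ Γ δ)
    (hδ : 0 ≤ δ) {α : ℝ} (hα : 0 < α) {w z : ι → ℝ} (hw : ∀ i ∉ Γ, w i = 0)
    (hz : ∀ i ∉ Γ, z i = 0) (hzw : z ⬝ᵥ z ≤ α ^ 2 * (w ⬝ᵥ w)) :
    -(α * δ) * (w ⬝ᵥ w) ≤ w ⬝ᵥ (Φᵀ * Φ - 1) *ᵥ z := by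
  have hlow := (hΦ (α • w + z) fun i hi => by simp [hw i hi, hz i hi]).1
  have hup := (hΦ (α • w - z) fun i hi => by simp [hw i hi, hz i hi]).2
  have hgram : w ⬝ᵥ (Φᵀ * Φ - 1) *ᵥ z = Φ *ᵥ w ⬝ᵥ Φ *ᵥ z - w ⬝ᵥ z := by
    rw [sub_mulVec, one_mulVec, ← mulVec_mulVec, dotProduct_sub, dotProduct_mulVec,
      vecMul_transpose]
  simp only [mulVec_add, mulVec_sub, mulVec_smul, dotProduct_add, add_dotProduct,
    dotProduct_sub, sub_dotProduct, dotProduct_smul, smul_dotProduct, smul_eq_mul] at hlow hup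
  rw [hgram, dotProduct_comm z w, dotProduct_comm (Φ *ᵥ z) (Φ *ᵥ w)] at *
  nlinarith [Finset.sum_nonneg fun i (_ : i ∈ Finset.univ) => mul_self_nonneg (w i)]

noncomputable def softThreshold (lam v : ℝ) : ℝ := max (v - lam) 0 - max (-v - lam) 0

noncomputable def softResidual (lam c v : ℝ) : ℝ :=
  if |c| ≤ lam then softThreshold lam v else v - c

section SoftThreshold

variable {lam : ℝ}

lemma softThreshold_of_abs_le {v : ℝ} (h : |v| ≤ lam) : softThreshold lam v = 0 := by
  rw [abs_le] at h
  simp [softThreshold, max_eq_right (sub_nonpos.2 h.2), max_eq_right (by linarith : -v - lam ≤ 0)]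

lemma softThreshold_of_lt (hlam : 0 ≤ lam) {v : ℝ} (h : lam < v) :
    softThreshold lam v = v - lam := by
  simp [softThreshold, max_eq_left (by linarith : 0 ≤ v - lam),
    max_eq_right (by linarith : -v - lam ≤ 0)]

lemma softThreshold_of_lt_neg (hlam : 0 ≤ lam) {v : ℝ} (h : v < -lam) :
    softThreshold lam v = v + lam := by
  rw [softThreshold, max_eq_right (by linarith : v - lam ≤ 0),
    max_eq_left (by linarith : 0 ≤ -v - lam)]
  ring

lemma abs_softThreshold_sub_le (hlam : 0 ≤ lam) (a b : ℝ) :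
    |softThreshold lam a - softThreshold lam b| ≤ |a - b| := by
  simp only [softThreshold, abs_le]
  have := abs_nonneg (a - b)
  have := le_abs_self (a - b)
  have := neg_abs_le (a - b)
  constructor <;>
  rcases le_total (a - lam) 0 with h1 | h1 <;> rcases le_total (-a - lam) 0 with h2 | h2 <;>
  rcases le_total (b - lam) 0 with h3 | h3 <;> rcases le_total (-b - lam) 0 with h4 | h4 <;>
  simp only [max_eq_left, max_eq_right, h1, h2, h3, h4] <;> linarith

lemma softThreshold_sq_le_mul_sub (hlam : 0 ≤ lam) (a : ℝ) {b : ℝ} (hb : |b| ≤ lam) :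
    softThreshold lam a ^ 2 ≤ softThreshold lam a * (a - b) := by
  rw [abs_le] at hb
  rcases lt_or_ge lam a with h | h
  · rw [softThreshold_of_lt hlam h]; nlinarith
  rcases lt_or_ge a (-lam) with h' | h'
  · rw [softThreshold_of_lt_neg hlam h']; nlinarith
  · rw [softThreshold_of_abs_le (abs_le.2 ⟨h', h⟩)]; simp

lemma hasDerivAt_softThreshold_sq (hlam : 0 ≤ lam) (v : ℝ) :
    HasDerivAt (fun x => softThreshold lam x ^ 2) (2 * softThreshold lam v) v := by
  have hsq : ∀ x, softThreshold lam x ^ 2 = max (x - lam) 0 ^ 2 + max (-x - lam) 0 ^ 2 := by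
    intro x
    have : max (x - lam) 0 * max (-x - lam) 0 = 0 := by
      rcases le_total (x - lam) 0 with h | h
      · rw [max_eq_right h, zero_mul]
      · rw [max_eq_right (by linarith : -x - lam ≤ 0), mul_zero]
    rw [softThreshold]; linear_combination (-2) * this
  rw [show (fun x => softThreshold lam x ^ 2) = _ from funext hsq]
  have hpos := (hasDerivAt_max_zero_sq (v - lam)).comp v ((hasDerivAt_id v).sub_const lam)
  have hneg := (hasDerivAt_max_zero_sq (-v - lam)).comp v ((hasDerivAt_neg v).sub_const lam)
  exact (hpos.add hneg).congr_deriv (by rw [softThreshold]; ring)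

variable {c : ℝ}

lemma softResidual_eq_zero {v : ℝ} (hv : |v| ≤ lam) (hc : |c| ≤ lam) :
    softResidual lam c v = 0 := by
  rw [softResidual, if_pos hc, softThreshold_of_abs_le hv]

lemma softResidual_sq_le_mul_sub (hlam : 0 ≤ lam) (v : ℝ) :
    softResidual lam c v ^ 2 ≤ softResidual lam c v * (v - c) := by
  unfold softResidual
  split_ifs with hc
  · exact softThreshold_sq_le_mul_sub hlam v hc
  · rw [sq]

lemma abs_softResidual_le (hlam : 0 ≤ lam) (v : ℝ) : |softResidual lam c v| ≤ |v - c| := by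
  unfold softResidual
  split_ifs with hc
  · simpa [softThreshold_of_abs_le hc] using abs_softThreshold_sub_le hlam v c
  · rfl

lemma abs_sub_le_mul_abs_softResidual (hlam : 0 ≤ lam) {g : ℝ → ℝ} {α : ℝ} (hα : 0 ≤ α)
    (hg : ∀ p q, |g p - g q| ≤ α * |softThreshold lam p - softThreshold lam q|) (v : ℝ) :
    |g v - g c| ≤ α * |softResidual lam c v| := by
  unfold softResidual
  split_ifs with hc
  · simpa [softThreshold_of_abs_le hc] using hg v c
  · exact (hg v c).trans (mul_le_mul_of_nonneg_left (abs_softThreshold_sub_le hlam v c) hα)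

lemma hasDerivAt_softResidual_sq (hlam : 0 ≤ lam) (v : ℝ) :
    HasDerivAt (fun x => softResidual lam c x ^ 2) (2 * softResidual lam c v) v := by
  unfold softResidual
  split_ifs
  · exact hasDerivAt_softThreshold_sq hlam v
  · refine ((hasDerivAt_pow 2 (v - c)).comp v ((hasDerivAt_id v).sub_const c)).congr_deriv ?_
    simp

section Activation

variable {lam : ℝ} {f : ℝ → ℝ}

lemma Tl_eq_oddExtension_softThreshold (hlam : 0 ≤ lam)
    (hf_odd : ∀ v : ℝ, lam ≤ |v| → f (-v) = -f v) (hf_lam : f lam = 0) (v : ℝ) :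
    Tl lam f v = oddExtension (fun s => f (s + lam)) (softThreshold lam v) := by
  rcases le_or_gt |v| lam with hv | hv
  · simp [Tl, hv, softThreshold_of_abs_le hv, oddExtension, hf_lam]
  rw [Tl, if_neg hv.not_ge]
  rcases lt_abs.1 hv with hv' | hv'
  · simp [oddExtension, softThreshold_of_lt hlam hv', (by linarith : (0:ℝ) ≤ v - lam)]
  · rw [softThreshold_of_lt_neg hlam (by linarith), oddExtension, if_neg (by linarith),
      show -(v + lam) + lam = -v by ring, hf_odd v hv.le, neg_neg]

lemma abs_Tl_sub_le {α : ℝ} (hlam : 0 ≤ lam) (hα : 0 ≤ α)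
    (hf_cont : ContinuousOn f {v : ℝ | lam ≤ |v|})
    (hf_diff : ∀ v : ℝ, lam < |v| → DifferentiableAt ℝ f v)
    (hf_odd : ∀ v : ℝ, lam ≤ |v| → f (-v) = -f v) (hf_lam : f lam = 0)
    (hf_bound : ∀ v : ℝ, lam < |v| → |deriv f v| ≤ α) (p q : ℝ) :
    |Tl lam f p - Tl lam f q| ≤ α * |softThreshold lam p - softThreshold lam q| := by
  lift α to ℝ≥0 using hα
  have lam_lt {v : ℝ} (hv : lam < v) : lam < |v| := hv.trans_le (le_abs_self v)
  have hf_lip : LipschitzOnWith α f (Ici lam) := by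
    refine (convex_Ici lam).lipschitzOnWith_of_abs_deriv_le
      (hf_cont.mono fun v hv => (mem_Ici.1 hv).trans (le_abs_self v)) ?_ ?_ <;>
    rw [interior_Ici]
    · exact fun v hv => (hf_diff v (lam_lt hv)).differentiableWithinAt
    · exact fun v hv => hf_bound v (lam_lt hv)
  have hg : LipschitzOnWith α (fun s => f (s + lam)) (Ici 0) :=
    LipschitzOnWith.of_dist_le_mul fun s hs t ht => by
      simpa [Real.dist_eq] using hf_lip.dist_le_mul (s + lam) (by simp_all) (t + lam) (by simp_all)
  have := (hg.lipschitzWith_oddExtension (by simpa using hf_lam)).dist_le_mul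
    (softThreshold lam p) (softThreshold lam q)
  simpa only [Tl_eq_oddExtension_softThreshold hlam hf_odd hf_lam, Real.dist_eq] using this

lemma Tl_eq_zero_iff (hf_cont : ContinuousOn f {v : ℝ | lam ≤ |v|})
    (hf_odd : ∀ v : ℝ, lam ≤ |v| → f (-v) = -f v) (hf_lam : f lam = 0)
    (hf_pos : ∀ v : ℝ, lam < |v| → 0 < deriv f v) (c : ℝ) : Tl lam f c = 0 ↔ |c| ≤ lam := by
  refine ⟨fun hc => ?_, fun h => if_pos h⟩
  by_contra! hlt
  have hmono : StrictMonoOn f (Ici lam) := by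
    refine strictMonoOn_of_deriv_pos (convex_Ici lam)
      (hf_cont.mono fun v hv => (mem_Ici.1 hv).trans (le_abs_self v)) fun v hv => ?_
    rw [interior_Ici] at hv
    exact hf_pos v ((mem_Ioi.1 hv).trans_le (le_abs_self v))
  have hfc : f c = 0 := by rwa [Tl, if_neg hlt.not_ge] at hc
  have hf_abs : f |c| = f lam := by
    rcases abs_choice c with h | h <;> rw [h]
    · rw [hfc, hf_lam]
    · rw [hf_odd c hlt.le, hfc, neg_zero, hf_lam]
  exact hlt.ne' (hmono.injOn hlt.le self_mem_Ici hf_abs)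

end Activation

noncomputable def softResidualEnergy {ι : Type*} [Fintype ι] (lam : ℝ) (c x : ι → ℝ) : ℝ :=
  ∑ i, softResidual lam (c i) (x i) ^ 2

section Dissipation

variable {ι : Type*} [Fintype ι] {lam : ℝ}

lemma softResidualEnergy_le (hlam : 0 ≤ lam) (c x : ι → ℝ) :
    softResidualEnergy lam c x ≤ ∑ i, (x i - c i) ^ 2 :=
  Finset.sum_le_sum fun i _ => sq_le_sq.2 (abs_softResidual_le hlam (x i))

lemma sum_sq_sub_le_mul_softResidualEnergy (hlam : 0 ≤ lam) {α : ℝ} (hα : 0 ≤ α) {g : ℝ → ℝ}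
    (hg : ∀ p q, |g p - g q| ≤ α * |softThreshold lam p - softThreshold lam q|) (c x : ι → ℝ) :
    ∑ i, (g (x i) - g (c i)) ^ 2 ≤ α ^ 2 * softResidualEnergy lam c x := by
  rw [softResidualEnergy, Finset.mul_sum]
  refine Finset.sum_le_sum fun i _ => ?_
  rw [← mul_pow, sq_le_sq, abs_mul, abs_of_nonneg hα]
  exact abs_sub_le_mul_abs_softResidual hlam hα hg (x i)

lemma HasDerivWithinAt.softResidualEnergy (hlam : 0 ≤ lam) {c : ι → ℝ} {x : ℝ → ι → ℝ}
    {x' : ι → ℝ} {s : Set ℝ} {t : ℝ} (hx : HasDerivWithinAt x x' s t) :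
    HasDerivWithinAt (fun r => softResidualEnergy lam c (x r))
      (2 * ∑ i, softResidual lam (c i) (x t i) * x' i) s t := by
  have := HasDerivWithinAt.fun_sum fun i (_ : i ∈ Finset.univ) =>
    (hasDerivAt_softResidual_sq (c := c i) hlam (x t i)).comp_hasDerivWithinAt t
      (hasDerivWithinAt_pi.1 hx i)
  simpa [_root_.softResidualEnergy, Finset.mul_sum, mul_assoc] using this

theorem mul_sum_softResidual_mul_le [DecidableEq ι] {m : Type*} [Fintype m]
    {Φ : Matrix m ι ℝ} {α δ τ : ℝ} {g : ℝ → ℝ} {x c v b : ι → ℝ} (hlam : 0 ≤ lam) (hα : 0 < α)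
    (hδ : 0 ≤ δ) (hg_eq_zero : ∀ p, g p = 0 ↔ |p| ≤ lam)
    (hg : ∀ p q, |g p - g q| ≤ α * |softThreshold lam p - softThreshold lam q|)
    (hΦ : RestrictedIsometry Φ {i | lam < |x i| ∨ g (c i) ≠ 0} δ)
    (hv : τ • v = -x - (Φᵀ * Φ - 1) *ᵥ (fun i => g (x i)) + b)
    (hc : (0 : ι → ℝ) = -c - (Φᵀ * Φ - 1) *ᵥ (fun i => g (c i)) + b) :
    τ * ∑ i, softResidual lam (c i) (x i) * v i ≤ -(1 - α * δ) * softResidualEnergy lam c x := by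
  set w := fun i => softResidual lam (c i) (x i)
  set z := fun i => g (x i) - g (c i)
  set Γ := {i | lam < |x i| ∨ g (c i) ≠ 0}
  have hE : softResidualEnergy lam c x = w ⬝ᵥ w := by simp [softResidualEnergy, dotProduct, w, sq]
  have off_support {i} (hi : i ∉ Γ) : |x i| ≤ lam ∧ |c i| ≤ lam := by
    simpa [Γ, ← hg_eq_zero] using hi
  have hw : ∀ i ∉ Γ, w i = 0 := fun i hi =>
    softResidual_eq_zero (off_support hi).1 (off_support hi).2
  have hz : ∀ i ∉ Γ, z i = 0 := fun i hi => by
    simp [z, (hg_eq_zero _).2 (off_support hi).1, (hg_eq_zero _).2 (off_support hi).2]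
  have hzw : z ⬝ᵥ z ≤ α ^ 2 * (w ⬝ᵥ w) := by
    rw [← hE]
    convert sum_sq_sub_le_mul_softResidualEnergy hlam hα.le hg c x using 1
    simp [z, dotProduct, sq]
  have hw_sq : w ⬝ᵥ w ≤ w ⬝ᵥ (x - c) := Finset.sum_le_sum fun i _ => by
    simpa [sq] using softResidual_sq_le_mul_sub hlam (c := c i) (x i)
  have hgram := hΦ.neg_mul_le_dotProduct_mulVec hδ hα hw hz hzw
  have hv' : τ • v = -(x - c) - (Φᵀ * Φ - 1) *ᵥ z := by
    rw [hv, show z = (fun i => g (x i)) - fun i => g (c i) from rfl, mulVec_sub]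
    linear_combination (norm := module) -hc
  calc τ * (w ⬝ᵥ v) = w ⬝ᵥ (τ • v) := by rw [dotProduct_smul, smul_eq_mul]
    _ = -(w ⬝ᵥ (x - c)) - w ⬝ᵥ (Φᵀ * Φ - 1) *ᵥ z := by rw [hv', dotProduct_sub, dotProduct_neg]
    _ ≤ -(1 - α * δ) * softResidualEnergy lam c x := by rw [hE]; linarith

theorem softResidualEnergy_le_mul_exp [DecidableEq ι] {m : Type*} [Fintype m]
    {Φ : Matrix m ι ℝ} {α δ τ : ℝ} {g : ℝ → ℝ} {u u' : ℝ → ι → ℝ} {c b : ι → ℝ}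
    (hlam : 0 ≤ lam) (hα : 0 < α) (hδ : 0 ≤ δ) (hτ : 0 < τ)
    (hg_eq_zero : ∀ p, g p = 0 ↔ |p| ≤ lam)
    (hg : ∀ p q, |g p - g q| ≤ α * |softThreshold lam p - softThreshold lam q|)
    (hΦ : ∀ s, 0 ≤ s → RestrictedIsometry Φ {i | lam < |u s i| ∨ g (c i) ≠ 0} δ)
    (hderiv : ∀ s, 0 ≤ s → HasDerivWithinAt u (u' s) (Ici 0) s)
    (hdyn : ∀ s, 0 ≤ s → τ • u' s = -u s - (Φᵀ * Φ - 1) *ᵥ (fun i => g (u s i)) + b)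
    (hc : (0 : ι → ℝ) = -c - (Φᵀ * Φ - 1) *ᵥ (fun i => g (c i)) + b) {t : ℝ} (ht : 0 ≤ t) :
    softResidualEnergy lam c (u t) ≤
      softResidualEnergy lam c (u 0) * exp (-(2 * (1 - α * δ) / τ) * t) := by
  refine le_mul_exp_of_hasDerivWithinAt_le
    (fun s hs => (hderiv s hs).softResidualEnergy hlam) (fun s hs => ?_) ht
  have := mul_sum_softResidual_mul_le hlam hα hδ hg_eq_zero hg (hΦ s hs) (hdyn s hs) hc
  calc 2 * ∑ i, softResidual lam (c i) (u s i) * u' s i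
      = 2 / τ * (τ * ∑ i, softResidual lam (c i) (u s i) * u' s i) := by field_simp
    _ ≤ 2 / τ * (-(1 - α * δ) * softResidualEnergy lam c (u s)) := by gcongr
    _ = _ := by ring

end Dissipation

theorem stmt8_general {M N : ℕ}
    (Φ : Matrix (Fin M) (Fin N) ℝ) (y : Fin M → ℝ)
    (lam : ℝ) (hlam : 0 < lam) (τ : ℝ) (hτ : 0 < τ) (f : ℝ → ℝ)
    (hf_cont : ContinuousOn f {v : ℝ | lam ≤ |v|})
    (hf_diff : ∀ v : ℝ, lam < |v| → DifferentiableAt ℝ f v)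
    (hf_odd : ∀ v : ℝ, lam ≤ |v| → f (-v) = -f v)
    (hf_lam : f lam = 0)
    (hf_pos : ∀ v : ℝ, lam < |v| → 0 < deriv f v)
    (α : ℝ) (hα : 0 < α)
    (hf_bound : ∀ v : ℝ, lam < |v| → |deriv f v| ≤ α)
    (u u' : ℝ → Fin N → ℝ)
    (hderiv : ∀ t : ℝ, 0 ≤ t → HasDerivWithinAt u (u' t) (Set.Ici 0) t)
    (hdyn : ∀ t : ℝ, 0 ≤ t →
      τ • u' t =
        -(u t) - (Φᵀ * Φ - 1) *ᵥ (fun n => Tl lam f (u t n)) + Φᵀ *ᵥ y)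
    (ustar : Fin N → ℝ)
    (hfix : (0 : Fin N → ℝ) =
      -ustar - (Φᵀ * Φ - 1) *ᵥ (fun n => Tl lam f (ustar n)) + Φᵀ *ᵥ y)
    (δ : ℝ) (hδ : 0 ≤ δ)
    (hRIP : ∀ t : ℝ, 0 ≤ t → ∀ x : Fin N → ℝ,
      (∀ n : Fin N, |u t n| ≤ lam → Tl lam f (ustar n) = 0 → x n = 0) →
      (1 - δ) * ∑ n, x n ^ 2 ≤ ∑ m, ((Φ *ᵥ x) m) ^ 2 ∧
        ∑ m, ((Φ *ᵥ x) m) ^ 2 ≤ (1 + δ) * ∑ n, x n ^ 2) :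
    ∀ t : ℝ, 0 ≤ t →
      Real.sqrt (∑ n, (Tl lam f (u t n) - Tl lam f (ustar n)) ^ 2) ≤
        α * Real.sqrt (∑ n, (u 0 n - ustar n) ^ 2) *
          Real.exp (-(1 - α * δ) * t / τ) := by
  intro t ht
  have hTl := abs_Tl_sub_le hlam.le hα.le hf_cont hf_diff hf_odd hf_lam hf_bound
  have hΦ : ∀ s, 0 ≤ s → RestrictedIsometry Φ {n | lam < |u s n| ∨ Tl lam f (ustar n) ≠ 0} δ :=
    fun s hs x hx => by
      simpa [dotProduct, sq] using hRIP s hs x fun n h1 h2 => hx n (by simp [h1, h2])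
  have hdecay := softResidualEnergy_le_mul_exp hlam.le hα hδ hτ
    (Tl_eq_zero_iff hf_cont hf_odd hf_lam hf_pos) hTl hΦ hderiv hdyn hfix ht
  rw [Real.sqrt_le_iff]
  refine ⟨by positivity, ?_⟩
  calc _ ≤ α ^ 2 * softResidualEnergy lam ustar (u t) :=
        sum_sq_sub_le_mul_softResidualEnergy hlam.le hα.le hTl ustar (u t)
    _ ≤ α ^ 2 * ((∑ n, (u 0 n - ustar n) ^ 2) * exp (-(2 * (1 - α * δ) / τ) * t)) := by
      gcongr
      exact hdecay.trans (by gcongr; exact softResidualEnergy_le hlam.le ustar (u 0))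
    _ = _ := by
      rw [mul_pow, mul_pow, Real.sq_sqrt (Finset.sum_nonneg fun n _ => sq_nonneg _), sq (exp _),
        ← exp_add]
      ring_nf

/-- under the bound `|f'| ≤ α` and the restricted-isometry-type
condition with constant `δ` (with `αδ < 1`) on vectors supported on
`Γ(t) ∪ Γ*`, the LCA output converges exponentially:
`‖T_λ(u(t)) − a*‖₂ ≤ α‖u(0) − u*‖₂ e^{−(1−αδ)t/τ}`. -/
theorem stmt8 {M N : ℕ} (hM : 0 < M) (hN : 0 < N)
    (Φ : Matrix (Fin M) (Fin N) ℝ) (y : Fin M → ℝ)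
    (lam : ℝ) (hlam : 0 < lam) (τ : ℝ) (hτ : 0 < τ) (f : ℝ → ℝ)
    (hf_cont : ContinuousOn f {v : ℝ | lam ≤ |v|})
    (hf_diff : ∀ v : ℝ, lam < |v| → DifferentiableAt ℝ f v)
    (hf_odd : ∀ v : ℝ, lam ≤ |v| → f (-v) = -f v)
    (hf_lam : f lam = 0)
    (hf_pos : ∀ v : ℝ, lam < |v| → 0 < deriv f v)
    (hf_le : ∀ v : ℝ, lam ≤ v → f v ≤ v)
    (α : ℝ) (hα : 0 < α)
    (hf_bound : ∀ v : ℝ, lam < |v| → |deriv f v| ≤ α)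
    (u u' : ℝ → Fin N → ℝ)
    (hderiv : ∀ t : ℝ, 0 ≤ t → HasDerivWithinAt u (u' t) (Set.Ici 0) t)
    (hdyn : ∀ t : ℝ, 0 ≤ t →
      τ • u' t =
        -(u t) - (Φᵀ * Φ - 1) *ᵥ (fun n => Tl lam f (u t n)) + Φᵀ *ᵥ y)
    (ustar : Fin N → ℝ)
    (hfix : (0 : Fin N → ℝ) =
      -ustar - (Φᵀ * Φ - 1) *ᵥ (fun n => Tl lam f (ustar n)) + Φᵀ *ᵥ y)
    (δ : ℝ) (hδ : 0 ≤ δ) (hαδ : α * δ < 1)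
    (hRIP : ∀ t : ℝ, 0 ≤ t → ∀ x : Fin N → ℝ,
      (∀ n : Fin N, |u t n| ≤ lam → Tl lam f (ustar n) = 0 → x n = 0) →
      (1 - δ) * ∑ n, x n ^ 2 ≤ ∑ m, ((Φ *ᵥ x) m) ^ 2 ∧
        ∑ m, ((Φ *ᵥ x) m) ^ 2 ≤ (1 + δ) * ∑ n, x n ^ 2) :
    ∀ t : ℝ, 0 ≤ t →
      Real.sqrt (∑ n, (Tl lam f (u t n) - Tl lam f (ustar n)) ^ 2) ≤
        α * Real.sqrt (∑ n, (u 0 n - ustar n) ^ 2) *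
          Real.exp (-(1 - α * δ) * t / τ) :=
  stmt8_general Φ y lam hlam τ hτ f hf_cont hf_diff hf_odd hf_lam hf_pos α hα hf_bound u u' hderiv
    hdyn ustar hfix δ hδ hRIP
end SoftThreshold
end

section
/- Assume in addition that there is α > 0 with |f'(v)| ≤ α for all v in the interior of D. Let u*, ũ ∈ ℝ^N and define ã ∈ ℝ^N componentwise by ã_n := T_λ(ũ_n + u*_n) − T_λ(u*_n). Then for every subset 𝒯 ⊆ {1,…,N}: Σ_{n∈𝒯} ã_n² ≤ α·Σ_{n∈𝒯} ũ_n·ã_n ≤ α²·Σ_{n∈𝒯} ũ_n². -/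
/-- with `ã_n := T_λ(ũ_n + u*_n) − T_λ(u*_n)` and `|f'| ≤ α`,
for every subset `𝒯`:
`Σ_{n∈𝒯} ã_n² ≤ α Σ_{n∈𝒯} ũ_n ã_n ≤ α² Σ_{n∈𝒯} ũ_n²`. -/
theorem stmt12 {N : ℕ} (hN : 0 < N) (lam : ℝ) (hlam : 0 < lam) (f : ℝ → ℝ)
    (hf_cont : ContinuousOn f {v : ℝ | lam ≤ |v|})
    (hf_diff : ∀ v : ℝ, lam < |v| → DifferentiableAt ℝ f v)
    (hf_odd : ∀ v : ℝ, lam ≤ |v| → f (-v) = -f v)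
    (hf_lam : f lam = 0)
    (hf_pos : ∀ v : ℝ, lam < |v| → 0 < deriv f v)
    (hf_le : ∀ v : ℝ, lam ≤ v → f v ≤ v)
    (α : ℝ) (hα : 0 < α)
    (hf_bound : ∀ v : ℝ, lam < |v| → |deriv f v| ≤ α)
    (ustar ut : Fin N → ℝ) (T : Finset (Fin N)) :
    (∑ n ∈ T, (Tl lam f (ut n + ustar n) - Tl lam f (ustar n)) ^ 2 ≤
        α * ∑ n ∈ T, ut n * (Tl lam f (ut n + ustar n) - Tl lam f (ustar n)))
      ∧
    (α * ∑ n ∈ T, ut n * (Tl lam f (ut n + ustar n) - Tl lam f (ustar n)) ≤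
        α ^ 2 * ∑ n ∈ T, ut n ^ 2) := by
  -- abbreviations for positive points
  have habs : ∀ v : ℝ, lam < v → lam < |v| := fun v hv => by
    rw [abs_of_pos (hlam.trans hv)]; exact hv
  have habs' : ∀ v : ℝ, lam ≤ v → lam ≤ |v| := fun v hv => by
    rw [abs_of_pos (lt_of_lt_of_le hlam hv)]; exact hv
  have hfc : ContinuousOn f (Set.Ici lam) := by
    apply hf_cont.mono
    intro v hv
    exact habs' v hv
  -- f is monotone on [lam, ∞)
  have hmono : MonotoneOn f (Set.Ici lam) := by
    apply monotoneOn_of_deriv_nonneg (convex_Ici lam) hfc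
    · intro v hv
      rw [interior_Ici] at hv
      exact (hf_diff v (habs v hv)).differentiableWithinAt
    · intro v hv
      rw [interior_Ici] at hv
      exact (hf_pos v (habs v hv)).le
  -- α v - f v is monotone on [lam, ∞)
  have hg : MonotoneOn (fun v => α * v - f v) (Set.Ici lam) := by
    apply monotoneOn_of_deriv_nonneg (convex_Ici lam)
    · exact (continuousOn_const.mul continuousOn_id).sub hfc
    · intro v hv
      rw [interior_Ici] at hv
      exact (((hasDerivAt_id v).const_mul α).sub
        (hf_diff v (habs v hv)).hasDerivAt).differentiableAt.differentiableWithinAt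
    · intro v hv
      rw [interior_Ici] at hv
      have hd : HasDerivAt (fun v => α * v - f v) (α * 1 - deriv f v) v :=
        ((hasDerivAt_id v).const_mul α).sub (hf_diff v (habs v hv)).hasDerivAt
      rw [hd.deriv]
      have := (abs_le.mp (hf_bound v (habs v hv))).2
      linarith
  have hflip : ∀ x y : ℝ, lam ≤ x → x ≤ y → f y - f x ≤ α * (y - x) := by
    intro x y hx hxy
    have h := hg hx (le_trans hx hxy) hxy
    simp only at h
    linarith
  have hfmono : ∀ x y : ℝ, lam ≤ x → x ≤ y → f x ≤ f y := fun x y hx hxy =>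
    hmono hx (le_trans hx hxy) hxy
  -- Tl values
  have hT0 : ∀ u : ℝ, |u| ≤ lam → Tl lam f u = 0 := fun u hu => if_pos hu
  have hTval : ∀ u : ℝ, lam < u → Tl lam f u = f u := by
    intro u hu
    exact if_neg (not_le.mpr (habs u hu))
  have hTodd : ∀ u : ℝ, Tl lam f (-u) = - Tl lam f u := by
    intro u
    unfold Tl
    rw [abs_neg]
    split
    · simp
    · exact hf_odd u (le_of_lt (not_le.mp (by assumption)))
  have hTpos : ∀ u : ℝ, lam < u → 0 ≤ Tl lam f u := by
    intro u hu
    rw [hTval u hu, ← hf_lam]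
    exact hfmono lam u le_rfl hu.le
  have hTneg : ∀ u : ℝ, u < -lam → Tl lam f u ≤ 0 := by
    intro u hu
    have h := hTpos (-u) (by linarith)
    rw [hTodd] at h
    linarith
  -- monotonicity of Tl
  have hTmono : ∀ x y : ℝ, x ≤ y → Tl lam f x ≤ Tl lam f y := by
    intro x y hxy
    by_cases hx : |x| ≤ lam
    · by_cases hy : |y| ≤ lam
      · rw [hT0 x hx, hT0 y hy]
      · have hy' : lam < y := by
          rcases abs_le.mp hx with ⟨hx1, _⟩
          rcases lt_abs.mp (not_le.mp hy) with h | h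
          · exact h
          · linarith
        rw [hT0 x hx]
        exact hTpos y hy'
    · by_cases hxp : lam < x
      · have hy' : lam < y := lt_of_lt_of_le hxp hxy
        rw [hTval x hxp, hTval y hy']
        exact hfmono x y hxp.le hxy
      · have hx' : x < -lam := by
          rcases lt_abs.mp (not_le.mp hx) with h | h
          · exact absurd h hxp
          · linarith
        by_cases hy : |y| ≤ lam
        · rw [hT0 y hy]
          exact hTneg x hx'
        · by_cases hyp : lam < y
          · exact le_trans (hTneg x hx') (hTpos y hyp)
          · have hy' : y < -lam := by
              rcases lt_abs.mp (not_le.mp hy) with h | h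
              · exact absurd h hyp
              · linarith
            have h := hfmono (-y) (-x) (by linarith) (by linarith)
            have h1 := hTodd x
            have h2 := hTodd y
            rw [hTval (-x) (by linarith), hTval (-y) (by linarith)] at *
            linarith
  -- Lipschitz-type bound, first on the right half
  have hTlipR : ∀ x y : ℝ, -lam ≤ x → x ≤ y →
      Tl lam f y - Tl lam f x ≤ α * (y - x) := by
    intro x y hx hxy
    by_cases hxp : lam < x
    · have hy' : lam < y := lt_of_lt_of_le hxp hxy
      rw [hTval x hxp, hTval y hy']
      exact hflip x y hxp.le hxy
    · have hx' : |x| ≤ lam := abs_le.mpr ⟨hx, not_lt.mp hxp⟩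
      rw [hT0 x hx']
      by_cases hyp : lam < y
      · rw [hTval y hyp]
        have h := hflip lam y le_rfl hyp.le
        rw [hf_lam] at h
        have : α * (y - lam) ≤ α * (y - x) := by
          apply mul_le_mul_of_nonneg_left _ hα.le
          linarith [not_lt.mp hxp]
        linarith
      · have hy' : |y| ≤ lam := abs_le.mpr ⟨by linarith, not_lt.mp hyp⟩
        rw [hT0 y hy']
        have : 0 ≤ α * (y - x) := mul_nonneg hα.le (by linarith)
        linarith
  -- full Lipschitz-type bound
  have hTlip : ∀ x y : ℝ, x ≤ y → Tl lam f y - Tl lam f x ≤ α * (y - x) := by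
    intro x y hxy
    by_cases hx : -lam ≤ x
    · exact hTlipR x y hx hxy
    · by_cases hy : y ≤ lam
      · have h := hTlipR (-y) (-x) (by linarith) (by linarith)
        rw [hTodd x, hTodd y] at h
        have : (-x) - (-y) = y - x := by ring
        rw [this] at h
        linarith
      · have h1 := hTlipR lam y (by linarith) (by linarith)
        have h2 := hTlipR (-lam) (-x) (by linarith) (by linarith)
        rw [hTodd x] at h2
        rw [hT0 lam (by rw [abs_of_pos hlam]), hT0 (-lam) (by rw [abs_neg, abs_of_pos hlam])] at *
        have heq : α * (y - lam) + α * (-x - -lam) = α * (y - x) := by ring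
        linarith
  -- pointwise inequalities
  have key : ∀ n : Fin N,
      (Tl lam f (ut n + ustar n) - Tl lam f (ustar n)) ^ 2 ≤
        α * (ut n * (Tl lam f (ut n + ustar n) - Tl lam f (ustar n))) ∧
      ut n * (Tl lam f (ut n + ustar n) - Tl lam f (ustar n)) ≤ α * (ut n) ^ 2 := by
    intro n
    set s := ustar n with hs
    set u := ut n with hu
    set a := Tl lam f (u + s) - Tl lam f s with ha
    rcases le_or_gt 0 u with hu0 | hu0
    · have h1 : 0 ≤ a := by
        have := hTmono s (u + s) (by linarith)
        simp only [ha]; linarith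
      have h2 : a ≤ α * u := by
        have := hTlip s (u + s) (by linarith)
        simp only [ha] at *
        have he : u + s - s = u := by ring
        rw [he] at this
        linarith
      constructor
      · nlinarith
      · nlinarith
    · have h1 : a ≤ 0 := by
        have := hTmono (u + s) s (by linarith)
        simp only [ha]; linarith
      have h2 : α * u ≤ a := by
        have := hTlip (u + s) s (by linarith)
        simp only [ha] at *
        have he : s - (u + s) = -u := by ring
        rw [he] at this
        linarith
      constructor
      · nlinarith
      · nlinarith
  constructor
  · calc ∑ n ∈ T, (Tl lam f (ut n + ustar n) - Tl lam f (ustar n)) ^ 2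
        ≤ ∑ n ∈ T, α * (ut n * (Tl lam f (ut n + ustar n) - Tl lam f (ustar n))) :=
          Finset.sum_le_sum fun n _ => (key n).1
      _ = α * ∑ n ∈ T, ut n * (Tl lam f (ut n + ustar n) - Tl lam f (ustar n)) :=
          (Finset.mul_sum _ _ _).symm
  · have h : ∑ n ∈ T, ut n * (Tl lam f (ut n + ustar n) - Tl lam f (ustar n)) ≤
        ∑ n ∈ T, α * (ut n) ^ 2 := Finset.sum_le_sum fun n _ => (key n).2
    rw [← Finset.mul_sum] at h
    have := mul_le_mul_of_nonneg_left h hα.le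
    calc α * ∑ n ∈ T, ut n * (Tl lam f (ut n + ustar n) - Tl lam f (ustar n))
        ≤ α * (α * ∑ n ∈ T, (ut n) ^ 2) := this
      _ = α ^ 2 * ∑ n ∈ T, ut n ^ 2 := by ring
end

section
/- Let S ⊆ {1,…,N} and δ ≥ 0, and suppose (1 − δ)‖x‖₂² ≤ ‖Φx‖₂² ≤ (1 + δ)‖x‖₂² for all x ∈ ℝ^N supported on S. Then for any vectors u, a ∈ ℝ^N both supported on S, |uᵀ((ΦᵀΦ − I)a)| ≤ δ·‖u‖₂·‖a‖₂. -/
/-!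
For the symmetric matrix `A = ΦᵀΦ - 1` the isometry bound says `|xᵀAx| ≤ δ‖x‖²` on vectors
supported on `S`. Polarization, `4 uᵀAa = (u+a)ᵀA(u+a) - (u-a)ᵀA(u-a)`, and the parallelogram law
give `2|uᵀAa| ≤ δ(‖u‖² + ‖a‖²)`; applied to `‖a‖u` and `‖u‖a`, which have equal norms, this
becomes `|uᵀAa| ≤ δ‖u‖‖a‖`.
-/

open Matrix

def supportedOn {R ι : Type*} [Semiring R] (S : Set ι) : Submodule R (ι → R) where
  carrier := {x | ∀ i ∉ S, x i = 0}
  add_mem' hx hy i hi := by simp [hx i hi, hy i hi]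
  zero_mem' _ _ := rfl
  smul_mem' c x hx i hi := by simp [hx i hi]

namespace Matrix

variable {ι : Type*} [Fintype ι]

section CommRing

variable {R : Type*} [CommRing R]

theorem add_dotProduct_add_add_sub_dotProduct_sub (x y : ι → R) :
    (x + y) ⬝ᵥ (x + y) + (x - y) ⬝ᵥ (x - y) = 2 * (x ⬝ᵥ x) + 2 * (y ⬝ᵥ y) := by
  simp only [add_dotProduct, dotProduct_add, sub_dotProduct, dotProduct_sub, dotProduct_comm y x]
  ring

variable {A : Matrix ι ι R}

theorem IsSymm.dotProduct_mulVec_comm (hA : A.IsSymm) (x y : ι → R) :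
    x ⬝ᵥ A *ᵥ y = y ⬝ᵥ A *ᵥ x := by
  rw [dotProduct_mulVec, ← mulVec_transpose, hA.eq, dotProduct_comm]

theorem IsSymm.four_mul_dotProduct_mulVec (hA : A.IsSymm) (x y : ι → R) :
    4 * (x ⬝ᵥ A *ᵥ y) = (x + y) ⬝ᵥ A *ᵥ (x + y) - (x - y) ⬝ᵥ A *ᵥ (x - y) := by
  simp only [mulVec_add, mulVec_sub, add_dotProduct, dotProduct_add, sub_dotProduct,
    dotProduct_sub, hA.dotProduct_mulVec_comm y x]
  ring

theorem sum_sq_eq_dotProduct_self (x : ι → R) : ∑ i, x i ^ 2 = x ⬝ᵥ x := by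
  simp only [dotProduct, sq]

theorem dotProduct_transpose_mul_self_sub_one_mulVec [DecidableEq ι] {m : Type*} [Fintype m]
    (Φ : Matrix m ι R) (x y : ι → R) :
    x ⬝ᵥ (Φᵀ * Φ - 1) *ᵥ y = Φ *ᵥ x ⬝ᵥ Φ *ᵥ y - x ⬝ᵥ y := by
  rw [sub_mulVec, dotProduct_sub, one_mulVec, ← mulVec_mulVec, dotProduct_mulVec,
    vecMul_transpose]

end CommRing

theorem dotProduct_self_nonneg {R : Type*} [Ring R] [LinearOrder R] [IsStrictOrderedRing R]
    (x : ι → R) : 0 ≤ x ⬝ᵥ x :=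
  Fintype.sum_nonneg fun i => mul_self_nonneg (x i)

section BoundedForm

variable {A : Matrix ι ι ℝ} {p : Submodule ℝ (ι → ℝ)} {C : ℝ}

theorem IsSymm.two_mul_abs_dotProduct_mulVec_le (hA : A.IsSymm)
    (hC : ∀ x ∈ p, |x ⬝ᵥ A *ᵥ x| ≤ C * (x ⬝ᵥ x)) {x y : ι → ℝ} (hx : x ∈ p) (hy : y ∈ p) :
    2 * |x ⬝ᵥ A *ᵥ y| ≤ C * (x ⬝ᵥ x + y ⬝ᵥ y) := by
  have hpolar : 4 * |x ⬝ᵥ A *ᵥ y| ≤ |(x + y) ⬝ᵥ A *ᵥ (x + y)| + |(x - y) ⬝ᵥ A *ᵥ (x - y)| := by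
    rw [← abs_of_pos (four_pos : (0 : ℝ) < 4), ← abs_mul, hA.four_mul_dotProduct_mulVec]
    exact abs_sub _ _
  calc 2 * |x ⬝ᵥ A *ᵥ y|
      ≤ (|(x + y) ⬝ᵥ A *ᵥ (x + y)| + |(x - y) ⬝ᵥ A *ᵥ (x - y)|) / 2 := by linarith
    _ ≤ (C * ((x + y) ⬝ᵥ (x + y)) + C * ((x - y) ⬝ᵥ (x - y))) / 2 := by
      gcongr
      exacts [hC _ (p.add_mem hx hy), hC _ (p.sub_mem hx hy)]
    _ = C * (x ⬝ᵥ x + y ⬝ᵥ y) := by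
      rw [← mul_add, add_dotProduct_add_add_sub_dotProduct_sub]
      ring

theorem IsSymm.abs_dotProduct_mulVec_le (hA : A.IsSymm)
    (hC : ∀ x ∈ p, |x ⬝ᵥ A *ᵥ x| ≤ C * (x ⬝ᵥ x)) {x y : ι → ℝ} (hx : x ∈ p) (hy : y ∈ p) :
    |x ⬝ᵥ A *ᵥ y| ≤ C * √(x ⬝ᵥ x) * √(y ⬝ᵥ y) := by
  rcases eq_or_ne x 0 with rfl | hx0
  · simp
  rcases eq_or_ne y 0 with rfl | hy0
  · simp
  set α := √(x ⬝ᵥ x)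
  set β := √(y ⬝ᵥ y)
  have hα : α ^ 2 = x ⬝ᵥ x := Real.sq_sqrt (dotProduct_self_nonneg x)
  have hβ : β ^ 2 = y ⬝ᵥ y := Real.sq_sqrt (dotProduct_self_nonneg y)
  have hαpos : 0 < α :=
    Real.sqrt_pos.mpr ((dotProduct_self_nonneg x).lt_of_ne' (dotProduct_self_eq_zero.not.mpr hx0))
  have hβpos : 0 < β :=
    Real.sqrt_pos.mpr ((dotProduct_self_nonneg y).lt_of_ne' (dotProduct_self_eq_zero.not.mpr hy0))
  have hscaled := hA.two_mul_abs_dotProduct_mulVec_le hC (p.smul_mem β hx) (p.smul_mem α hy)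
  simp only [mulVec_smul, dotProduct_smul, smul_dotProduct, smul_eq_mul, abs_mul,
    abs_of_pos hαpos, abs_of_pos hβpos, ← hα, ← hβ] at hscaled
  refine le_of_mul_le_mul_left ?_ (by positivity : 0 < 2 * (α * β))
  calc 2 * (α * β) * |x ⬝ᵥ A *ᵥ y| = 2 * (α * (β * |x ⬝ᵥ A *ᵥ y|)) := by ring
    _ ≤ C * (β * (β * α ^ 2) + α * (α * β ^ 2)) := hscaled
    _ = 2 * (α * β) * (C * α * β) := by ring

end BoundedForm

end Matrix

theorem stmt14_general {M N : ℕ}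
    (Φ : Matrix (Fin M) (Fin N) ℝ) (S : Set (Fin N)) (δ : ℝ)
    (hRIP : ∀ x : Fin N → ℝ, (∀ n : Fin N, n ∉ S → x n = 0) →
      (1 - δ) * ∑ n, x n ^ 2 ≤ ∑ m, ((Φ *ᵥ x) m) ^ 2 ∧
        ∑ m, ((Φ *ᵥ x) m) ^ 2 ≤ (1 + δ) * ∑ n, x n ^ 2)
    (u a : Fin N → ℝ)
    (hu : ∀ n : Fin N, n ∉ S → u n = 0)
    (ha : ∀ n : Fin N, n ∉ S → a n = 0) :
    |u ⬝ᵥ ((Φᵀ * Φ - 1) *ᵥ a)| ≤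
      δ * Real.sqrt (∑ n, u n ^ 2) * Real.sqrt (∑ n, a n ^ 2) := by
  have hquad : ∀ x ∈ supportedOn S, |x ⬝ᵥ (Φᵀ * Φ - 1) *ᵥ x| ≤ δ * (x ⬝ᵥ x) := by
    intro x hx
    obtain ⟨hlower, hupper⟩ := hRIP x hx
    simp only [sum_sq_eq_dotProduct_self] at hlower hupper
    rw [dotProduct_transpose_mul_self_sub_one_mulVec, abs_le]
    constructor <;> linarith
  have hsymm : (Φᵀ * Φ - 1).IsSymm :=
    IsSymm.sub (by rw [IsSymm, transpose_mul, transpose_transpose]) isSymm_one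
  simpa only [sum_sq_eq_dotProduct_self] using
    hsymm.abs_dotProduct_mulVec_le hquad hu ha

/-- if `Φ` satisfies the restricted-isometry-type bound with
constant `δ` on vectors supported on `S`, then for `u, a` supported on `S`,
`|uᵀ(ΦᵀΦ − I)a| ≤ δ ‖u‖₂ ‖a‖₂`. -/
theorem stmt14 {M N : ℕ} (hM : 0 < M) (hN : 0 < N)
    (Φ : Matrix (Fin M) (Fin N) ℝ) (S : Set (Fin N)) (δ : ℝ) (hδ : 0 ≤ δ)
    (hRIP : ∀ x : Fin N → ℝ, (∀ n : Fin N, n ∉ S → x n = 0) →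
      (1 - δ) * ∑ n, x n ^ 2 ≤ ∑ m, ((Φ *ᵥ x) m) ^ 2 ∧
        ∑ m, ((Φ *ᵥ x) m) ^ 2 ≤ (1 + δ) * ∑ n, x n ^ 2)
    (u a : Fin N → ℝ)
    (hu : ∀ n : Fin N, n ∉ S → u n = 0)
    (ha : ∀ n : Fin N, n ∉ S → a n = 0) :
    |u ⬝ᵥ ((Φᵀ * Φ - 1) *ᵥ a)| ≤
      δ * Real.sqrt (∑ n, u n ^ 2) * Real.sqrt (∑ n, a n ^ 2) :=
  stmt14_general Φ S δ hRIP u a hu ha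
end

section
/- Let u : [0,∞) → ℝ^N be continuously differentiable and satisfy the LCA dynamics τ·u̇(t) = −u(t) − (ΦᵀΦ − I)·T_λ(u(t)) + Φᵀy for all t ≥ 0, where τ > 0 and T_λ is the soft-thresholding function. Then the BPDN objective is non-increasing along the trajectory: the function t ↦ V(T_λ(u(t))) is antitone on [0,∞). -/
/-!
Write `a(t) = T_λ(u(t))`. The vector `u - a` is a subgradient of `λ‖·‖₁` at `a`, so convexity of
`V` and the dynamics give `V(a(s)) - V(a(t)) ≤ -τ ⟨u̇(s), a(s) - a(t)⟩`. Since `T_λ` is monotone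
and `1`-Lipschitz, each coordinate of `a(s) - a(t)` is a fraction in `[0, 1]` of the coordinate of
`u(s) - u(t) ≈ (s - t) u̇(t)`, so the right-hand side is at most `o(s - t)` as `s ↓ t`. Thus the
upper right Dini derivative of `t ↦ V(a(t))` is nonpositive, and a continuous function with this
property is antitone.
-/

open Matrix

open Filter Topology Set

theorem antitoneOn_of_frequently_slope_lt {f : ℝ → ℝ} {s : Set ℝ} [s.OrdConnected]
    (hf : ContinuousOn f s) (hslope : ∀ x ∈ s, ∀ r > 0, ∃ᶠ z in 𝓝[>] x, slope f x z < r) :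
    AntitoneOn f s := by
  intro a ha b hb hab
  have hIcc : Icc a b ⊆ s := Set.OrdConnected.out ‹_› ha hb
  exact image_le_of_liminf_slope_right_le_deriv_boundary (B := fun _ => f a) (B' := fun _ => 0)
    (hf.mono hIcc) le_rfl continuousOn_const (fun x _ => hasDerivWithinAt_const x _ _)
    (fun x hx r hr => hslope x (hIcc (Ico_subset_Icc_self hx)) r hr) (right_mem_Icc.2 hab)

section SoftThresh

variable {lam : ℝ}

theorem softThresh_eq_sub_clamp (hlam : 0 ≤ lam) (v : ℝ) :
    softThresh lam v = v - min (max v (-lam)) lam := by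
  unfold softThresh
  split_ifs with h
  · rw [abs_le] at h
    rw [max_eq_left h.1, min_eq_left h.2, sub_self]
  · rcases lt_abs.mp (not_le.1 h) with h' | h'
    · rw [Real.sign_of_pos (hlam.trans_lt h'), mul_one, max_eq_left (by linarith),
        min_eq_right h'.le]
    · rw [Real.sign_of_neg (by linarith), max_eq_right (by linarith),
        min_eq_left (by linarith)]
      ring

theorem continuous_softThresh (hlam : 0 ≤ lam) : Continuous (softThresh lam) := by
  rw [funext (softThresh_eq_sub_clamp hlam)]
  fun_prop

theorem softThresh_sub_mem_Icc (hlam : 0 ≤ lam) {v w : ℝ} (hvw : v ≤ w) :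
    softThresh lam w - softThresh lam v ∈ Icc 0 (w - v) := by
  rw [softThresh_eq_sub_clamp hlam, softThresh_eq_sub_clamp hlam]
  have hmono : min (max v (-lam)) lam ≤ min (max w (-lam)) lam :=
    min_le_min_right _ (max_le_max_right _ hvw)
  constructor
  · simp only [min_def, max_def]
    split_ifs <;> linarith
  · linarith

/-- Since `T_λ` is monotone and `1`-Lipschitz, `T_λ w - T_λ v = θ (w - v)` with `θ ∈ [0, 1]`. -/
theorem min_zero_le_softThresh_sub_mul (hlam : 0 ≤ lam) (v w x : ℝ) :
    min 0 ((w - v) * x) ≤ (softThresh lam w - softThresh lam v) * x := by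
  rcases le_total v w with hvw | hwv
  · obtain ⟨h0, h1⟩ := softThresh_sub_mem_Icc hlam hvw
    rcases le_total 0 x with hx | hx
    · exact (min_le_left _ _).trans (mul_nonneg h0 hx)
    · exact (min_le_right _ _).trans (mul_le_mul_of_nonpos_right h1 hx)
  · obtain ⟨h0, h1⟩ := softThresh_sub_mem_Icc hlam hwv
    rcases le_total 0 x with hx | hx
    · refine (min_le_right _ _).trans ?_
      nlinarith
    · refine (min_le_left _ _).trans ?_
      nlinarith

/-- `v - T_λ v` is a subgradient of `λ|·|` at `T_λ v`. -/
theorem mul_abs_softThresh_add_le (hlam : 0 ≤ lam) (v z : ℝ) :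
    lam * |softThresh lam v| + (v - softThresh lam v) * (z - softThresh lam v) ≤ lam * |z| := by
  unfold softThresh
  split_ifs with h
  · have : v * z ≤ lam * |z| :=
      (le_abs_self _).trans (abs_mul v z ▸ mul_le_mul_of_nonneg_right h (abs_nonneg z))
    simpa using this
  · rcases lt_abs.mp (not_le.1 h) with h' | h'
    · rw [Real.sign_of_pos (hlam.trans_lt h'), abs_of_nonneg (by linarith)]
      nlinarith [le_abs_self z]
    · rw [Real.sign_of_neg (by linarith), abs_of_nonpos (by linarith)]
      nlinarith [neg_abs_le z]

end SoftThresh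

theorem half_sum_sq_sub_mulVec_add_le {m n : Type*} [Fintype m] [Fintype n]
    (Φ : Matrix m n ℝ) (y : m → ℝ) (a z : n → ℝ) :
    (1 / 2) * ∑ i, (y i - (Φ *ᵥ a) i) ^ 2 + (Φᵀ *ᵥ (Φ *ᵥ a - y)) ⬝ᵥ (z - a)
      ≤ (1 / 2) * ∑ i, (y i - (Φ *ᵥ z) i) ^ 2 := by
  rw [Matrix.mulVec_transpose, ← dotProduct_mulVec, Matrix.mulVec_sub, dotProduct,
    Finset.mul_sum, Finset.mul_sum, ← Finset.sum_add_distrib]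
  refine Finset.sum_le_sum fun i _ => ?_
  simp only [Pi.sub_apply]
  nlinarith [sq_nonneg ((Φ *ᵥ a) i - (Φ *ᵥ z) i)]

theorem bpdn_softThresh_add_le {M N : ℕ} (Φ : Matrix (Fin M) (Fin N) ℝ) (y : Fin M → ℝ)
    {lam : ℝ} (hlam : 0 ≤ lam) (v z : Fin N → ℝ) :
    bpdn Φ y lam (softThresh lam ∘ v)
      + (Φᵀ *ᵥ (Φ *ᵥ (softThresh lam ∘ v) - y) + (v - softThresh lam ∘ v))
        ⬝ᵥ (z - softThresh lam ∘ v)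
      ≤ bpdn Φ y lam z := by
  have hl1 : lam * ∑ n, |softThresh lam (v n)|
      + (v - softThresh lam ∘ v) ⬝ᵥ (z - softThresh lam ∘ v)
      ≤ lam * ∑ n, |z n| := by
    rw [dotProduct, Finset.mul_sum, Finset.mul_sum, ← Finset.sum_add_distrib]
    exact Finset.sum_le_sum fun n _ => mul_abs_softThresh_add_le hlam (v n) (z n)
  have hquad := half_sum_sq_sub_mulVec_add_le Φ y (softThresh lam ∘ v) z
  unfold bpdn
  rw [add_dotProduct]
  simp only [Function.comp_apply] at hquad hl1 ⊢
  linarith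

theorem continuous_bpdn {M N : ℕ} (Φ : Matrix (Fin M) (Fin N) ℝ) (y : Fin M → ℝ) (lam : ℝ) :
    Continuous (bpdn Φ y lam) := by
  unfold bpdn Matrix.mulVec dotProduct
  fun_prop

/-- The LCA equation says that the subgradient `Φᵀ(Φ T_λ v - y) + (v - T_λ v)` of `V` at `T_λ v`
is `-τ w`. -/
theorem bpdn_softThresh_le_of_lca {M N : ℕ} (Φ : Matrix (Fin M) (Fin N) ℝ) (y : Fin M → ℝ)
    {lam τ : ℝ} (hlam : 0 ≤ lam) {v w : Fin N → ℝ}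
    (hdyn : τ • w = -v - (Φᵀ * Φ - 1) *ᵥ (softThresh lam ∘ v) + Φᵀ *ᵥ y) (z : Fin N → ℝ) :
    bpdn Φ y lam (softThresh lam ∘ v) ≤ bpdn Φ y lam z + τ * (w ⬝ᵥ (z - softThresh lam ∘ v)) := by
  have hgrad : Φᵀ *ᵥ (Φ *ᵥ (softThresh lam ∘ v) - y) + (v - softThresh lam ∘ v) = -(τ • w) := by
    rw [hdyn, Matrix.sub_mulVec, Matrix.one_mulVec, ← Matrix.mulVec_mulVec, Matrix.mulVec_sub]
    abel
  have h := bpdn_softThresh_add_le Φ y hlam v z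
  rw [hgrad, neg_dotProduct, smul_dotProduct, smul_eq_mul] at h
  linarith

theorem slope_bpdn_softThresh_le {M N : ℕ} (Φ : Matrix (Fin M) (Fin N) ℝ) (y : Fin M → ℝ)
    {lam τ : ℝ} (hlam : 0 ≤ lam) (hτ : 0 ≤ τ) (u : ℝ → Fin N → ℝ) (w : Fin N → ℝ) {t s : ℝ}
    (hts : t < s) (hdyn : τ • w = -u s - (Φᵀ * Φ - 1) *ᵥ (softThresh lam ∘ u s) + Φᵀ *ᵥ y) :
    slope (fun r => bpdn Φ y lam (softThresh lam ∘ u r)) t s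
      ≤ -τ * ∑ n, min 0 (slope (fun r => u r n) t s * w n) := by
  have hst : 0 < s - t := sub_pos.2 hts
  have hterm : ∀ n, min 0 (slope (fun r => u r n) t s * w n)
      ≤ (softThresh lam (u s n) - softThresh lam (u t n)) * (w n / (s - t)) := by
    intro n
    rw [slope_def_field, div_mul_eq_mul_div, mul_div_assoc]
    exact min_zero_le_softThresh_sub_mul hlam _ _ _
  have hsum : ∑ n, min 0 (slope (fun r => u r n) t s * w n)
      ≤ (w ⬝ᵥ (softThresh lam ∘ u s - softThresh lam ∘ u t)) / (s - t) := by
    rw [dotProduct, Finset.sum_div]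
    refine (Finset.sum_le_sum fun n _ => hterm n).trans_eq (Finset.sum_congr rfl fun n _ => ?_)
    simp only [Pi.sub_apply, Function.comp_apply]
    ring
  have hdescent := bpdn_softThresh_le_of_lca Φ y hlam hdyn (softThresh lam ∘ u t)
  rw [← neg_sub, dotProduct_neg] at hdescent
  calc slope (fun r => bpdn Φ y lam (softThresh lam ∘ u r)) t s
      ≤ -τ * ((w ⬝ᵥ (softThresh lam ∘ u s - softThresh lam ∘ u t)) / (s - t)) := by
        rw [slope_def_field, div_le_iff₀ hst]
        field_simp
        linarith
    _ ≤ -τ * ∑ n, min 0 (slope (fun r => u r n) t s * w n) :=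
        mul_le_mul_of_nonpos_left hsum (neg_nonpos.2 hτ)

/-- The product tends to `(f' t)² ≥ 0`. -/
theorem tendsto_min_zero_slope_mul {f f' : ℝ → ℝ} {t : ℝ}
    (hf : HasDerivWithinAt f (f' t) (Ioi t) t) (hf' : ContinuousWithinAt f' (Ioi t) t) :
    Tendsto (fun s => min 0 (slope f t s * f' s)) (𝓝[>] t) (𝓝 0) := by
  have h := tendsto_const_nhds (x := (0 : ℝ)).min
    (((hasDerivWithinAt_iff_tendsto_slope' (lt_irrefl t)).1 hf).mul hf')
  rwa [min_eq_left (mul_self_nonneg (f' t))] at h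

theorem stmt16_general {M N : ℕ}
    (Φ : Matrix (Fin M) (Fin N) ℝ) (y : Fin M → ℝ)
    (lam : ℝ) (hlam : 0 < lam) (τ : ℝ) (hτ : 0 < τ)
    (u u' : ℝ → Fin N → ℝ)
    (hderiv : ∀ t : ℝ, 0 ≤ t → HasDerivWithinAt u (u' t) (Set.Ici 0) t)
    (hcont : ContinuousOn u' (Set.Ici 0))
    (hdyn : ∀ t : ℝ, 0 ≤ t →
      τ • u' t =
        -(u t) - (Φᵀ * Φ - 1) *ᵥ (fun n => softThresh lam (u t n)) + Φᵀ *ᵥ y) :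
    AntitoneOn (fun t => bpdn Φ y lam (fun n => softThresh lam (u t n)))
      (Set.Ici 0) := by
  have hucont : ContinuousOn u (Ici 0) := fun t ht => (hderiv t ht).continuousWithinAt
  have hgcont : ContinuousOn (fun t => bpdn Φ y lam (softThresh lam ∘ u t)) (Ici 0) :=
    (continuous_bpdn Φ y lam).comp_continuousOn
      (continuousOn_pi.2 fun n => (continuous_softThresh hlam.le).comp_continuousOn
        ((continuous_apply n).comp_continuousOn hucont))
  refine antitoneOn_of_frequently_slope_lt hgcont fun t ht r hr => ?_
  have hIoi : Ioi t ⊆ Ici 0 := fun s hs => (mem_Ici.1 ht).trans (le_of_lt hs)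
  have hbound : Tendsto (fun s => -τ * ∑ n, min 0 (slope (fun r => u r n) t s * u' s n))
      (𝓝[>] t) (𝓝 0) := by
    have hcoord : ∀ n, Tendsto (fun s => min 0 (slope (fun r => u r n) t s * u' s n))
        (𝓝[>] t) (𝓝 0) := fun n => tendsto_min_zero_slope_mul
      (hasDerivWithinAt_pi.1 ((hderiv t ht).mono hIoi) n)
      ((continuous_apply n).continuousAt.comp_continuousWithinAt ((hcont t ht).mono hIoi))
    simpa using (tendsto_finsetSum Finset.univ fun n _ => hcoord n).const_mul (-τ)
  refine Eventually.frequently ?_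
  filter_upwards [hbound.eventually (gt_mem_nhds hr), self_mem_nhdsWithin] with s hs hts
  exact (slope_bpdn_softThresh_le Φ y hlam.le hτ.le u (u' s) hts (hdyn s (hIoi hts))).trans_lt hs

/-- along any continuously differentiable solution of the
soft-thresholding LCA dynamics on `[0,∞)`, the BPDN objective
`t ↦ V(T_λ(u(t)))` is non-increasing (antitone) on `[0,∞)`. -/
theorem stmt16 {M N : ℕ} (hM : 0 < M) (hN : 0 < N)
    (Φ : Matrix (Fin M) (Fin N) ℝ) (y : Fin M → ℝ)
    (lam : ℝ) (hlam : 0 < lam) (τ : ℝ) (hτ : 0 < τ)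
    (u u' : ℝ → Fin N → ℝ)
    (hderiv : ∀ t : ℝ, 0 ≤ t → HasDerivWithinAt u (u' t) (Set.Ici 0) t)
    (hcont : ContinuousOn u' (Set.Ici 0))
    (hdyn : ∀ t : ℝ, 0 ≤ t →
      τ • u' t =
        -(u t) - (Φᵀ * Φ - 1) *ᵥ (fun n => softThresh lam (u t n)) + Φᵀ *ᵥ y) :
    AntitoneOn (fun t => bpdn Φ y lam (fun n => softThresh lam (u t n)))
      (Set.Ici 0) :=
  stmt16_general Φ y lam hlam τ hτ u u' hderiv hcont hdyn
end

section
/- Let u : [0,∞) → ℝ^N be differentiable and satisfy the LCA dynamics τ·u̇(t) = −u(t) − (ΦᵀΦ − I)·T_λ(u(t)) + Φᵀy, where T_λ is the soft-thresholding function. Let I be an open interval on which the signed active pattern is constant: for each index n, either u_n(t) > λ for all t ∈ I, or u_n(t) < −λ for all t ∈ I, or |u_n(t)| < λ for all t ∈ I. Then the function t ↦ V(T_λ(u(t))) is differentiable on I with derivative d/dt V(T_λ(u(t))) = −τ·Σ_{n ∈ Γ(t)} |u̇_n(t)|², where Γ(t) = {n : |u_n(t)| > λ}. In particular this derivative is ≤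 0. -/
open Matrix

/-! On the interval every coordinate of `x = T_λ ∘ u` is locally an affine function of `u`
(`u - λ sign u` on the active set `Γ`, `0` off it), so `ẋ = 1_Γ u̇` and `|x_n|` has derivative
`sign u_n · ẋ_n`. The chain rule gives `d/dt V(x) = ⟨λ sign u - Φᵀ(y - Φx), ẋ⟩`; the LCA dynamics
turn `Φᵀ(y - Φx)` into `τu̇ + u - x`, and on `Γ` we have `u - x = λ sign u`, which leaves
`-τ ⟨u̇, 1_Γ u̇⟩`. -/

open Filter Topology

section SoftThreshold

variable {lam u : ℝ}

theorem softThresh_of_lt_abs (h : lam < |u|) : softThresh lam u = u - lam * Real.sign u :=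
  if_neg h.not_ge

theorem softThresh_eventuallyEq_zero (h : |u| < lam) : softThresh lam =ᶠ[𝓝 u] fun _ => 0 :=
  (continuous_abs.continuousAt.eventually_lt continuousAt_const h).mono fun _ hv => if_pos hv.le

theorem softThresh_eventually_of_lt_abs (hlam : 0 ≤ lam) (h : lam < |u|) :
    ∀ᶠ v in 𝓝 u, softThresh lam v = v - lam * Real.sign u ∧
      |softThresh lam v| = Real.sign u * softThresh lam v := by
  rcases lt_abs.1 h with hu | hu
  · filter_upwards [eventually_gt_nhds hu] with v hv
    rw [softThresh_of_lt_abs (lt_abs.2 (Or.inl hv)), Real.sign_of_pos (by linarith),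
      Real.sign_of_pos (by linarith), abs_of_pos (by linarith)]
    simp
  · filter_upwards [eventually_lt_nhds (lt_neg_of_lt_neg hu)] with v hv
    rw [softThresh_of_lt_abs (lt_abs.2 (Or.inr (by linarith))), Real.sign_of_neg (by linarith),
      Real.sign_of_neg (by linarith), abs_of_neg (by linarith)]
    simp

theorem hasDerivAt_softThresh (hlam : 0 ≤ lam) (hu : |u| ≠ lam) :
    HasDerivAt (softThresh lam) (if lam < |u| then 1 else 0) u := by
  rcases hu.lt_or_gt with h | h
  · rw [if_neg h.not_gt]
    exact (hasDerivAt_const u 0).congr_of_eventuallyEq (softThresh_eventuallyEq_zero h)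
  · rw [if_pos h]
    exact ((hasDerivAt_id u).sub_const _).congr_of_eventuallyEq
      ((softThresh_eventually_of_lt_abs hlam h).mono fun _ hv => hv.1)

theorem hasDerivAt_abs_softThresh (hlam : 0 ≤ lam) (hu : |u| ≠ lam) :
    HasDerivAt (fun v => |softThresh lam v|) (Real.sign u * if lam < |u| then 1 else 0) u := by
  rcases hu.lt_or_gt with h | h
  · rw [if_neg h.not_gt, mul_zero]
    exact (hasDerivAt_const u 0).congr_of_eventuallyEq
      ((softThresh_eventuallyEq_zero h).mono fun _ hv => by simp [hv])
  · exact ((hasDerivAt_softThresh hlam hu).const_mul _).congr_of_eventuallyEq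
      ((softThresh_eventually_of_lt_abs hlam h).mono fun _ hv => hv.2)

end SoftThreshold

theorem HasDerivAt.matrix_mulVec {m n : Type*} [Fintype n] (A : Matrix m n ℝ)
    {x : ℝ → n → ℝ} {x' : n → ℝ} {t : ℝ} (hx : HasDerivAt x x' t) :
    HasDerivAt (fun s => A *ᵥ x s) (A *ᵥ x') t :=
  hasDerivAt_pi.2 fun i => HasDerivAt.fun_sum fun j _ => (hasDerivAt_pi.1 hx j).const_mul (A i j)

theorem hasDerivAt_bpdn_comp {M N : ℕ} (Φ : Matrix (Fin M) (Fin N) ℝ) (y : Fin M → ℝ)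
    (lam : ℝ) {x : ℝ → Fin N → ℝ} {x' g : Fin N → ℝ} {t : ℝ} (hx : HasDerivAt x x' t)
    (habs : ∀ n, HasDerivAt (fun s => |x s n|) (g n * x' n) t) :
    HasDerivAt (fun s => bpdn Φ y lam (x s)) ((lam • g - Φᵀ *ᵥ (y - Φ *ᵥ x t)) ⬝ᵥ x') t := by
  have hres : HasDerivAt (fun s => y - Φ *ᵥ x s) (-(Φ *ᵥ x')) t := by
    simpa using (hasDerivAt_const t y).fun_sub (hx.matrix_mulVec Φ)
  have hsq : HasDerivAt (fun s => ∑ m, (y m - (Φ *ᵥ x s) m) ^ 2)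
      (∑ m, 2 * (y m - (Φ *ᵥ x t) m) * -(Φ *ᵥ x') m) t := by
    refine HasDerivAt.fun_sum fun m _ => ?_
    simpa using (hasDerivAt_pi.1 hres m).fun_pow 2
  refine ((hsq.const_mul (1 / 2)).add
    ((HasDerivAt.fun_sum fun n _ => habs n).const_mul lam)).congr_deriv ?_
  rw [sub_dotProduct, smul_dotProduct, mulVec_transpose, ← dotProduct_mulVec]
  simp only [dotProduct, Finset.mul_sum, Pi.sub_apply, smul_eq_mul]
  rw [add_comm, sub_eq_add_neg, ← Finset.sum_neg_distrib]
  exact congrArg _ (Finset.sum_congr rfl fun _ _ => by ring)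

theorem transpose_mulVec_residual_of_lca {M N : ℕ} {Φ : Matrix (Fin M) (Fin N) ℝ}
    {y : Fin M → ℝ} {τ : ℝ} {u u' x : Fin N → ℝ}
    (hdyn : τ • u' = -u - (Φᵀ * Φ - 1) *ᵥ x + Φᵀ *ᵥ y) :
    Φᵀ *ᵥ (y - Φ *ᵥ x) = τ • u' + u - x := by
  rw [hdyn, mulVec_sub, sub_mulVec, one_mulVec, ← mulVec_mulVec]
  abel

theorem stmt17_general {M N : ℕ}
    (Φ : Matrix (Fin M) (Fin N) ℝ) (y : Fin M → ℝ)
    (lam : ℝ) (hlam : 0 < lam) (τ : ℝ) (hτ : 0 < τ)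
    (u u' : ℝ → Fin N → ℝ)
    (hderiv : ∀ t : ℝ, 0 ≤ t → HasDerivWithinAt u (u' t) (Set.Ici 0) t)
    (hdyn : ∀ t : ℝ, 0 ≤ t →
      τ • u' t =
        -(u t) - (Φᵀ * Φ - 1) *ᵥ (fun n => softThresh lam (u t n)) + Φᵀ *ᵥ y)
    (a b : ℝ) (hI : Set.Ioo a b ⊆ Set.Ici 0)
    (hpattern : ∀ n : Fin N,
      (∀ t ∈ Set.Ioo a b, lam < u t n) ∨
      (∀ t ∈ Set.Ioo a b, u t n < -lam) ∨
      (∀ t ∈ Set.Ioo a b, |u t n| < lam)) :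
    ∀ t ∈ Set.Ioo a b,
      HasDerivAt (fun s => bpdn Φ y lam (fun n => softThresh lam (u s n)))
        (-τ * ∑ n : Fin N, if lam < |u t n| then (u' t n) ^ 2 else 0) t ∧
      -τ * (∑ n : Fin N, if lam < |u t n| then (u' t n) ^ 2 else 0) ≤ 0 := by
  intro t ht
  have hu : HasDerivAt u (u' t) t :=
    (hderiv t (hI ht)).hasDerivAt (mem_of_superset (isOpen_Ioo.mem_nhds ht) hI)
  have hne : ∀ n, |u t n| ≠ lam := fun n => by
    rcases hpattern n with h | h | h
    · exact (lt_abs.2 (Or.inl (h t ht))).ne'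
    · exact (lt_abs.2 (Or.inr (lt_neg_of_lt_neg (h t ht)))).ne'
    · exact (h t ht).ne
  set active : Fin N → ℝ := fun n => if lam < |u t n| then 1 else 0
  have hx : HasDerivAt (fun s n => softThresh lam (u s n)) (active * u' t) t :=
    hasDerivAt_pi.2 fun n =>
      ((hasDerivAt_softThresh hlam.le (hne n)).comp t (hasDerivAt_pi.1 hu n) :)
  have habs (n : Fin N) : HasDerivAt (fun s => |softThresh lam (u s n)|)
      (Real.sign (u t n) * (active * u' t) n) t :=
    ((hasDerivAt_abs_softThresh hlam.le (hne n)).comp t (hasDerivAt_pi.1 hu n) :).congr_deriv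
      (mul_assoc _ _ _)
  refine ⟨(hasDerivAt_bpdn_comp Φ y lam hx habs).congr_deriv ?_, ?_⟩
  · rw [transpose_mulVec_residual_of_lca (hdyn t (hI ht)), dotProduct, Finset.mul_sum]
    refine Finset.sum_congr rfl fun n _ => ?_
    simp only [active, Pi.sub_apply, Pi.add_apply, Pi.mul_apply, Pi.smul_apply, smul_eq_mul]
    split_ifs with h
    · rw [softThresh_of_lt_abs h]
      ring
    · ring
  · exact mul_nonpos_of_nonpos_of_nonneg (neg_nonpos.2 hτ.le)
      (Finset.sum_nonneg fun n _ => by split_ifs <;> positivity)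

/-- on an open interval `I = (a,b) ⊆ [0,∞)` on which the signed
active pattern of the trajectory is constant, the map `t ↦ V(T_λ(u(t)))` is
differentiable with derivative `−τ Σ_{n ∈ Γ(t)} |u̇_n(t)|² ≤ 0`, where
`Γ(t) = {n : |u_n(t)| > λ}`. -/
theorem stmt17 {M N : ℕ} (hM : 0 < M) (hN : 0 < N)
    (Φ : Matrix (Fin M) (Fin N) ℝ) (y : Fin M → ℝ)
    (lam : ℝ) (hlam : 0 < lam) (τ : ℝ) (hτ : 0 < τ)
    (u u' : ℝ → Fin N → ℝ)
    (hderiv : ∀ t : ℝ, 0 ≤ t → HasDerivWithinAt u (u' t) (Set.Ici 0) t)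
    (hdyn : ∀ t : ℝ, 0 ≤ t →
      τ • u' t =
        -(u t) - (Φᵀ * Φ - 1) *ᵥ (fun n => softThresh lam (u t n)) + Φᵀ *ᵥ y)
    (a b : ℝ) (hI : Set.Ioo a b ⊆ Set.Ici 0)
    (hpattern : ∀ n : Fin N,
      (∀ t ∈ Set.Ioo a b, lam < u t n) ∨
      (∀ t ∈ Set.Ioo a b, u t n < -lam) ∨
      (∀ t ∈ Set.Ioo a b, |u t n| < lam)) :
    ∀ t ∈ Set.Ioo a b,
      HasDerivAt (fun s => bpdn Φ y lam (fun n => softThresh lam (u s n)))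
        (-τ * ∑ n : Fin N, if lam < |u t n| then (u' t n) ^ 2 else 0) t ∧
      -τ * (∑ n : Fin N, if lam < |u t n| then (u' t n) ^ 2 else 0) ≤ 0 :=
  stmt17_general Φ y lam hlam τ hτ u u' hderiv hdyn a b hI hpattern
end
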